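/- arXiv:2603.19110 — 5 statements merged into one kernel-verified Lean document; each statement's English description precedes it below -/
import Mathlib

section
/- Consider the symplectic-LPN public-key encryption scheme: key generation samples A uniformly at random from the full-rank isotropic matrices in F₂^{2n×n}, samples x uniformly from F₂ⁿ and e from D_p^{⊗n}, and sets pk = (A, b) with b = Ax + e and sk = x; encryption of a bit μ ∈ {0,1} samples f from D_p^{⊗n} (independently of A, x, e) and outputs the ciphertext (u, c) with u = f ⊙ A ∈ F₂ⁿ (the vector whose i-th entry is the symplectic inner product of f with the i-th column of A) and c = (f ⊙ b) + μ; decryption outputs c + u·x. Then for every bit μ the decryption of the encryption of μ always equals μ + (f ⊙ e), and consequently for every p ∈ [0,1] the probability, over the randomness of A, x, e, f, that decryption returns μ is exactly 1/2 + (1/2)·(1 − (4/3)p²)ⁿ. -/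
open scoped BigOperators Classical

/-- The symplectic inner product on `F₂^{2n}` (coordinates indexed by `Fin n ⊕ Fin n`,
with `Sum.inl` the first block and `Sum.inr` the second block). -/
def symp {n : ℕ} (u v : (Fin n ⊕ Fin n) → ZMod 2) : ZMod 2 :=
  ∑ i : Fin n, (u (Sum.inl i) * v (Sum.inr i) + u (Sum.inr i) * v (Sum.inl i))

/-- A matrix with `2n` rows is isotropic if its columns are pairwise symplectically
orthogonal. -/
def IsIsotropic {n k : ℕ} (A : Matrix (Fin n ⊕ Fin n) (Fin k) (ZMod 2)) : Prop :=
  ∀ i j : Fin k, symp (fun r => A r i) (fun r => A r j) = 0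

/-- The (finite, nonempty) set of full-rank isotropic matrices in `F₂^{2n×k}`. -/
noncomputable def fullRankIso (n k : ℕ) :
    Finset (Matrix (Fin n ⊕ Fin n) (Fin k) (ZMod 2)) :=
  Finset.univ.filter fun A => A.rank = k ∧ IsIsotropic A

/-- Probability of a single pair under the depolarizing distribution `D_p`:
`(0,0)` has probability `1 - p`, each other pair has probability `p/3`. -/
noncomputable def pairProb (p : ℝ) (a b : ZMod 2) : ℝ :=
  if a = 0 ∧ b = 0 then 1 - p else p / 3

/-- Density of the depolarizing distribution `D_p^{⊗n}` on `F₂^{2n}`: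
the `n` pairs `(e_j, e_{n+j})` are i.i.d. with law `D_p`. -/
noncomputable def depDensity (p : ℝ) (n : ℕ) (e : (Fin n ⊕ Fin n) → ZMod 2) : ℝ :=
  ∏ j : Fin n, pairProb p (e (Sum.inl j)) (e (Sum.inr j))

/-- The output of decryption on the encryption of the bit `μ`, for key randomness
`A, x, e` and encryption randomness `f`:  `c + u · x` where
`u = f ⊙ A` (entrywise symplectic products with the columns of `A`) and
`c = f ⊙ (A x + e) + μ`. -/
def decOut {n : ℕ} (A : Matrix (Fin n ⊕ Fin n) (Fin n) (ZMod 2))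
    (x : Fin n → ZMod 2) (e f : (Fin n ⊕ Fin n) → ZMod 2) (μ : ZMod 2) : ZMod 2 :=
  (symp f (A.mulVec x + e) + μ) + ∑ i : Fin n, symp f (fun r => A r i) * x i

/- ====================  auxiliary lemmas  ==================== -/

lemma symp_add_right' {n : ℕ} (f v w : (Fin n ⊕ Fin n) → ZMod 2) :
    symp f (v + w) = symp f v + symp f w := by
  simp [symp, mul_add, Finset.sum_add_distrib]; ring_nf

lemma symp_mulVec' {n : ℕ} (f : (Fin n ⊕ Fin n) → ZMod 2)
    (A : Matrix (Fin n ⊕ Fin n) (Fin n) (ZMod 2)) (x : Fin n → ZMod 2) :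
    symp f (A.mulVec x) = ∑ i : Fin n, symp f (fun r => A r i) * x i := by
  simp only [symp, Matrix.mulVec, dotProduct, Finset.mul_sum, Finset.sum_mul,
    Finset.sum_add_distrib, add_mul]
  rw [Finset.sum_comm (f := fun a b => f (Sum.inl a) * (A (Sum.inr a) b * x b)),
    Finset.sum_comm (f := fun a b => f (Sum.inr a) * (A (Sum.inl a) b * x b))]
  simp [mul_assoc]

lemma decOut_eq' {n : ℕ} (A : Matrix (Fin n ⊕ Fin n) (Fin n) (ZMod 2))
    (x : Fin n → ZMod 2) (e f : (Fin n ⊕ Fin n) → ZMod 2) (μ : ZMod 2) :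
    decOut A x e f μ = μ + symp f e := by
  unfold decOut
  rw [symp_add_right', symp_mulVec']
  have h2 : ∀ s : ZMod 2, s + s = 0 := by decide
  linear_combination (h2 (∑ i : Fin n, symp f (fun r => A r i) * x i))

lemma sum_zmod2' (F : ZMod 2 → ℝ) : ∑ a, F a = F 0 + F 1 := Fin.sum_univ_two F

noncomputable def chi' (z : ZMod 2) : ℝ := if z = 0 then 1 else -1

lemma chi_add' (a b : ZMod 2) : chi' (a + b) = chi' a * chi' b := by
  rcases (by decide : ∀ z : ZMod 2, z = 0 ∨ z = 1) a with rfl | rfl <;>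
    rcases (by decide : ∀ z : ZMod 2, z = 0 ∨ z = 1) b with rfl | rfl <;> simp [chi', show (1:ZMod 2)+1 = 0 from by decide]

lemma chi_sum' {ι : Type*} (s : Finset ι) (g : ι → ZMod 2) :
    chi' (∑ i ∈ s, g i) = ∏ i ∈ s, chi' (g i) := by
  classical
  induction s using Finset.cons_induction with
  | empty => simp [chi']
  | cons a s ha ih => rw [Finset.sum_cons, Finset.prod_cons, chi_add', ih]

lemma indicator_eq' (z : ZMod 2) : (if z = 0 then (1:ℝ) else 0) = 1/2 + chi' z / 2 := by
  rcases (by decide : ∀ z : ZMod 2, z = 0 ∨ z = 1) z with rfl | rfl <;> simp [chi'] <;> norm_num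

def pairize' {n : ℕ} : ((Fin n ⊕ Fin n) → ZMod 2) ≃ (Fin n → ZMod 2 × ZMod 2) where
  toFun e j := (e (Sum.inl j), e (Sum.inr j))
  invFun g r := Sum.elim (fun j => (g j).1) (fun j => (g j).2) r
  left_inv e := by funext r; cases r <;> rfl
  right_inv g := rfl

def pairize2' {n : ℕ} :
    (((Fin n ⊕ Fin n) → ZMod 2) × ((Fin n ⊕ Fin n) → ZMod 2)) ≃
      (Fin n → (ZMod 2 × ZMod 2) × (ZMod 2 × ZMod 2)) where
  toFun ef j := ((ef.1 (Sum.inl j), ef.1 (Sum.inr j)), (ef.2 (Sum.inl j), ef.2 (Sum.inr j)))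
  invFun k := (fun r => Sum.elim (fun j => (k j).1.1) (fun j => (k j).1.2) r,
               fun r => Sum.elim (fun j => (k j).2.1) (fun j => (k j).2.2) r)
  left_inv ef := Prod.ext (funext fun r => by cases r <;> rfl)
    (funext fun r => by cases r <;> rfl)
  right_inv k := rfl

lemma sum_pairProb' (p : ℝ) : ∑ v : ZMod 2 × ZMod 2, pairProb p v.1 v.2 = 1 := by
  rw [Fintype.sum_prod_type]
  simp only [sum_zmod2' (fun a => _)]
  simp [pairProb]
  ring

lemma sum_depDensity' (p : ℝ) (n : ℕ) :
    ∑ e : (Fin n ⊕ Fin n) → ZMod 2, depDensity p n e = 1 := by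
  rw [← Equiv.sum_comp (pairize' (n := n)).symm]
  have : ∀ g : Fin n → ZMod 2 × ZMod 2,
      depDensity p n (pairize'.symm g) = ∏ j, pairProb p (g j).1 (g j).2 := fun g => rfl
  simp only [this]
  rw [← Fintype.prod_sum (f := fun (_ : Fin n) (v : ZMod 2 × ZMod 2) => pairProb p v.1 v.2)]
  simp [sum_pairProb']

noncomputable def w' (p : ℝ) (v : (ZMod 2 × ZMod 2) × (ZMod 2 × ZMod 2)) : ℝ :=
  pairProb p v.1.1 v.1.2 * pairProb p v.2.1 v.2.2 * chi' (v.2.1 * v.1.2 + v.2.2 * v.1.1)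

lemma sum_w' (p : ℝ) : ∑ v, w' p v = 1 - 4/3 * p^2 := by
  rw [Fintype.sum_prod_type]
  simp only [Fintype.sum_prod_type, sum_zmod2' (fun a => _)]
  simp [w', pairProb, chi', show (1:ZMod 2)+1 = 0 from by decide]
  ring

lemma corr' (p : ℝ) (n : ℕ) :
    ∑ e : (Fin n ⊕ Fin n) → ZMod 2, depDensity p n e *
      ∑ f : (Fin n ⊕ Fin n) → ZMod 2, depDensity p n f * chi' (symp f e)
      = (1 - 4/3 * p^2)^n := by
  simp only [Finset.mul_sum, ← mul_assoc]
  simp only [mul_assoc]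
  rw [← Fintype.sum_prod_type' (f := fun e f : (Fin n ⊕ Fin n) → ZMod 2 =>
    depDensity p n e * (depDensity p n f * chi' (symp f e)))]
  rw [← Equiv.sum_comp (pairize2' (n := n)).symm]
  have key : ∀ k : Fin n → (ZMod 2 × ZMod 2) × (ZMod 2 × ZMod 2),
      (fun ef : ((Fin n ⊕ Fin n) → ZMod 2) × ((Fin n ⊕ Fin n) → ZMod 2) =>
        depDensity p n ef.1 * (depDensity p n ef.2 * chi' (symp ef.2 ef.1))) (pairize2'.symm k)
      = ∏ j, w' p (k j) := by
    intro k
    have h1 : depDensity p n (pairize2'.symm k).1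
        = ∏ j, pairProb p ((k j).1.1) ((k j).1.2) := rfl
    have h2 : depDensity p n (pairize2'.symm k).2
        = ∏ j, pairProb p ((k j).2.1) ((k j).2.2) := rfl
    have h3 : chi' (symp (pairize2'.symm k).2 (pairize2'.symm k).1)
        = ∏ j, chi' ((k j).2.1 * (k j).1.2 + (k j).2.2 * (k j).1.1) := by
      rw [symp, chi_sum']; rfl
    simp only [h1, h2, h3, w', mul_assoc, ← Finset.prod_mul_distrib]
  simp only [key]
  rw [← Fintype.prod_sum (f := fun (_ : Fin n) v => w' p v), sum_w']
  simp

def A0' (n : ℕ) : Matrix (Fin n ⊕ Fin n) (Fin n) (ZMod 2) :=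
  Matrix.of fun r i => Sum.elim (fun _ => (0:ZMod 2)) (fun j => if j = i then 1 else 0) r

lemma A0_mem' (n : ℕ) : A0' n ∈ fullRankIso n n := by
  haveI : Fact (Nat.Prime 2) := ⟨Nat.prime_two⟩
  refine Finset.mem_filter.2 ⟨Finset.mem_univ _, ?_, ?_⟩
  · have hinj : Function.Injective (A0' n).mulVecLin := by
      intro x y hxy
      funext j
      have := congrFun hxy (Sum.inr j)
      simpa [A0', Matrix.mulVecLin_apply, Matrix.mulVec, dotProduct, ite_mul] using this
    rw [Matrix.rank]
    rw [LinearMap.finrank_range_of_inj hinj]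
    simp [Module.finrank_pi]
  · intro i j
    simp [symp, A0']

lemma card_pos' (n : ℕ) : 0 < (fullRankIso n n).card :=
  Finset.card_pos.2 ⟨A0' n, A0_mem' n⟩

/- ====================  main theorem  ==================== -/

/-- Correctness of the symplectic-LPN public-key encryption scheme: decryption of the
encryption of `μ` always equals `μ + (f ⊙ e)`, and consequently, over uniformly random
full-rank isotropic `A`, uniform `x`, and `e, f ~ D_p^{⊗n}`, decryption returns `μ`
with probability exactly `1/2 + (1/2)(1 - (4/3)p²)ⁿ`. -/
theorem stmt0 (n : ℕ) (μ : ZMod 2) :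
    (∀ A ∈ fullRankIso n n, ∀ (x : Fin n → ZMod 2) (e f : (Fin n ⊕ Fin n) → ZMod 2),
        decOut A x e f μ = μ + symp f e) ∧
    (∀ p : ℝ, 0 ≤ p → p ≤ 1 →
      (∑ A ∈ fullRankIso n n, ∑ x : Fin n → ZMod 2,
        ∑ e : (Fin n ⊕ Fin n) → ZMod 2, ∑ f : (Fin n ⊕ Fin n) → ZMod 2,
          (1 / ((fullRankIso n n).card : ℝ)) * (1 / 2 ^ n) *
            depDensity p n e * depDensity p n f *
            (if decOut A x e f μ = μ then 1 else 0))
        = 1 / 2 + (1 / 2) * (1 - (4 / 3) * p ^ 2) ^ n) := by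
  constructor
  · intro A _ x e f
    exact decOut_eq' A x e f μ
  · intro p _ _
    set c : ℝ := ((fullRankIso n n).card : ℝ) with hc
    have hc0 : c ≠ 0 := by
      simp only [hc]
      exact_mod_cast (card_pos' n).ne'
    have h2n : (2:ℝ)^n ≠ 0 := by positivity
    -- indicator rewriting
    have hdec : ∀ (A : Matrix (Fin n ⊕ Fin n) (Fin n) (ZMod 2)) (x : Fin n → ZMod 2)
        (e f : (Fin n ⊕ Fin n) → ZMod 2),
        (if decOut A x e f μ = μ then (1:ℝ) else 0) = 1/2 + chi' (symp f e)/2 := by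
      intro A x e f
      rw [decOut_eq' A x e f μ]
      simp only [add_eq_left]
      exact indicator_eq' _
    -- the double sum over e, f
    have hT : (∑ e : (Fin n ⊕ Fin n) → ZMod 2, depDensity p n e *
          ∑ f : (Fin n ⊕ Fin n) → ZMod 2, depDensity p n f * (1/2 + chi' (symp f e)/2))
        = 1/2 + 1/2 * (1 - 4/3 * p^2)^n := by
      have inner : ∀ e : (Fin n ⊕ Fin n) → ZMod 2,
          ∑ f : (Fin n ⊕ Fin n) → ZMod 2, depDensity p n f * (1/2 + chi' (symp f e)/2)
          = 1/2 + 1/2 * ∑ f : (Fin n ⊕ Fin n) → ZMod 2,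
              depDensity p n f * chi' (symp f e) := by
        intro e
        have hb : ∀ f : (Fin n ⊕ Fin n) → ZMod 2,
            depDensity p n f * (1/2 + chi' (symp f e)/2)
            = (1/2) * depDensity p n f + (1/2) * (depDensity p n f * chi' (symp f e)) := by
          intro f; ring
        simp only [hb, Finset.sum_add_distrib, ← Finset.mul_sum, sum_depDensity']
        ring
      have hb2 : ∀ e : (Fin n ⊕ Fin n) → ZMod 2,
          depDensity p n e * (1/2 + 1/2 * ∑ f : (Fin n ⊕ Fin n) → ZMod 2,
              depDensity p n f * chi' (symp f e))
          = (1/2) * depDensity p n e + (1/2) * (depDensity p n e *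
              ∑ f : (Fin n ⊕ Fin n) → ZMod 2, depDensity p n f * chi' (symp f e)) := by
        intro e; ring
      simp only [inner, hb2, Finset.sum_add_distrib, ← Finset.mul_sum, sum_depDensity']
      rw [corr' p n]
      ring
    -- per-(A,x) inner sum
    have step : ∀ (A : Matrix (Fin n ⊕ Fin n) (Fin n) (ZMod 2)) (x : Fin n → ZMod 2),
        (∑ e : (Fin n ⊕ Fin n) → ZMod 2, ∑ f : (Fin n ⊕ Fin n) → ZMod 2,
          (1 / c) * (1 / 2 ^ n) * depDensity p n e * depDensity p n f *
            (if decOut A x e f μ = μ then (1:ℝ) else 0))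
        = (1 / c) * (1 / 2 ^ n) * (1/2 + 1/2 * (1 - 4/3 * p^2)^n) := by
      intro A x
      have hb : ∀ e f : (Fin n ⊕ Fin n) → ZMod 2,
          (1 / c) * (1 / 2 ^ n) * depDensity p n e * depDensity p n f *
            (if decOut A x e f μ = μ then (1:ℝ) else 0)
          = ((1 / c) * (1 / 2 ^ n)) *
              (depDensity p n e * (depDensity p n f * (1/2 + chi' (symp f e)/2))) := by
        intro e f
        rw [hdec A x e f]
        ring
      simp only [hb, ← Finset.mul_sum]
      rw [hT]
    simp only [step]
    rw [Finset.sum_const, Finset.sum_const]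
    simp only [Finset.card_univ, Fintype.card_fun, ZMod.card, Fintype.card_fin, smul_eq_mul,
      nsmul_eq_mul]
    rw [← hc]
    push_cast
    field_simp
end

section
/- Let n ≥ 1 and let x ∈ F₂ⁿ be a fixed nonzero vector. If A is a uniformly random full-rank isotropic matrix in F₂^{2n×n}, then the random vector A·x is uniformly distributed over F₂^{2n} \ {0}; equivalently, Pr[A·x = z] = 1/(2^{2n} − 1) for every nonzero z ∈ F₂^{2n}. -/
open scoped BigOperators Classical

namespace SympAux

abbrev V (n : ℕ) := (Fin n ⊕ Fin n) → ZMod 2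

variable {n : ℕ}

lemma add_self : ∀ a : ZMod 2, a + a = 0 := by decide

lemma symp_eq (u v : V n) : symp u v = ∑ r : Fin n ⊕ Fin n, u r * v (Sum.swap r) := by
  rw [Fintype.sum_sum_type, symp, Finset.sum_add_distrib]
  rfl

lemma symp_comm (u v : V n) : symp u v = symp v u := by
  unfold symp; apply Finset.sum_congr rfl; intros; ring

lemma symp_self (v : V n) : symp v v = 0 := by
  unfold symp
  rw [← Finset.sum_const_zero (s := (Finset.univ : Finset (Fin n)))]
  apply Finset.sum_congr rfl; intro i _
  rw [mul_comm (v (Sum.inr i))]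
  exact add_self _

lemma symp_add_left (u u' w : V n) :
    symp (fun r => u r + u' r) w = symp u w + symp u' w := by
  unfold symp
  rw [← Finset.sum_add_distrib]
  apply Finset.sum_congr rfl; intros; ring

lemma symp_add_right (u w w' : V n) :
    symp u (fun r => w r + w' r) = symp u w + symp u w' := by
  rw [symp_comm, symp_add_left, symp_comm w u, symp_comm w' u]

lemma symp_mul_left (c : ZMod 2) (u w : V n) :
    symp (fun r => c * u r) w = c * symp u w := by
  unfold symp
  rw [Finset.mul_sum]
  apply Finset.sum_congr rfl; intros; ring

lemma symp_mul_right (c : ZMod 2) (u w : V n) :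
    symp u (fun r => c * w r) = c * symp u w := by
  rw [symp_comm, symp_mul_left, symp_comm w u]

end SympAux

namespace SympAux

variable {n : ℕ}

/-- symplectic transvection by `v`. -/
def Tv (v z : V n) : V n := fun r => z r + symp z v * v r

/-- transvection matrix. -/
def Tmat (v : V n) : Matrix (Fin n ⊕ Fin n) (Fin n ⊕ Fin n) (ZMod 2) :=
  1 + Matrix.of fun r c => v r * v (Sum.swap c)

lemma Tv_Tv (v z : V n) : Tv v (Tv v z) = z := by
  have hs : symp (Tv v z) v = symp z v := by
    unfold Tv
    rw [symp_add_left]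
    conv_lhs => rw [show (fun r => symp z v * v r) = (fun r => symp z v * v r) from rfl]
    rw [symp_mul_left, symp_self, mul_zero, add_zero]
  funext r
  simp only [Tv, hs]
  rw [add_assoc, add_self, add_zero]

lemma symp_Tv (v u u' : V n) : symp (Tv v u) (Tv v u') = symp u u' := by
  unfold Tv
  rw [symp_add_left, symp_mul_left, symp_add_right, symp_mul_right,
    symp_add_right, symp_mul_right, symp_self, mul_zero, add_zero,
    symp_comm v u', mul_comm (symp u v) (symp u' v), add_assoc, add_self, add_zero]

lemma Tmat_mulVec (v : V n) (w : V n) :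
    (Tmat v).mulVec w = Tv v w := by
  funext r
  simp only [Tmat, Matrix.add_mulVec, Matrix.one_mulVec, Tv, Pi.add_apply]
  congr 1
  simp only [Matrix.mulVec, dotProduct, Matrix.of_apply]
  rw [symp_eq, Finset.sum_mul]
  apply Finset.sum_congr rfl; intros; ring

lemma Tmat_mul_Tmat (v : V n) : Tmat v * Tmat v = 1 := by
  unfold Tmat
  set M : Matrix (Fin n ⊕ Fin n) (Fin n ⊕ Fin n) (ZMod 2) :=
    Matrix.of fun r c => v r * v (Sum.swap c) with hM
  have hMM : M * M = 0 := by
    ext r c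
    simp only [Matrix.mul_apply, Matrix.zero_apply, hM, Matrix.of_apply]
    have : ∀ s, v r * v (Sum.swap s) * (v s * v (Sum.swap c))
        = (v r * v (Sum.swap c)) * (v s * v (Sum.swap s)) := by intros; ring
    rw [Finset.sum_congr rfl (fun s _ => this s), ← Finset.mul_sum]
    rw [show (∑ s : Fin n ⊕ Fin n, v s * v (Sum.swap s)) = symp v v from (symp_eq v v).symm]
    rw [symp_self, mul_zero]
  rw [add_mul, mul_add, mul_add, one_mul, mul_one, hMM, add_zero]
  have : M + M = 0 := by ext r c; exact add_self _
  rw [one_mul, add_assoc, this, add_zero]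

lemma isUnit_det_Tmat (v : V n) : IsUnit (Tmat v).det := by
  apply IsUnit.of_mul_eq_one (Tmat v).det
  rw [← Matrix.det_mul, Tmat_mul_Tmat, Matrix.det_one]

end SympAux

namespace SympAux

variable {n k : ℕ}

lemma rank_iff_ker (A : Matrix (Fin n ⊕ Fin n) (Fin k) (ZMod 2)) :
    A.rank = k ↔ LinearMap.ker A.mulVecLin = ⊥ := by
  have h := LinearMap.finrank_range_add_finrank_ker A.mulVecLin
  rw [Module.finrank_pi, Fintype.card_fin] at h
  rw [Matrix.rank]
  constructor
  · intro hr
    have : Module.finrank (ZMod 2) (LinearMap.ker A.mulVecLin) = 0 := by omega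
    exact Submodule.finrank_eq_zero.mp this
  · intro hk
    rw [hk] at h
    simpa using h

lemma mulVec_ne_zero (A : Matrix (Fin n ⊕ Fin n) (Fin k) (ZMod 2))
    (hA : A.rank = k) (x : Fin k → ZMod 2) (hx : x ≠ 0) : A.mulVec x ≠ 0 := by
  intro h
  apply hx
  have := (rank_iff_ker A).mp hA
  have hm : A.mulVecLin x = 0 := h
  have : x ∈ LinearMap.ker A.mulVecLin := hm
  rw [(rank_iff_ker A).mp hA] at this
  simpa using this

lemma col_mul (v : V n) (A : Matrix (Fin n ⊕ Fin n) (Fin k) (ZMod 2)) (j : Fin k) :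
    (fun r => (Tmat v * A) r j) = Tv v (fun r => A r j) := by
  rw [← Tmat_mulVec]
  funext r
  simp [Matrix.mul_apply, Matrix.mulVec, dotProduct]

lemma mem_fullRankIso_mul (v : V n) (A : Matrix (Fin n ⊕ Fin n) (Fin k) (ZMod 2))
    (hA : A ∈ fullRankIso n k) : Tmat v * A ∈ fullRankIso n k := by
  rw [fullRankIso, Finset.mem_filter] at hA ⊢
  obtain ⟨-, hr, hi⟩ := hA
  refine ⟨Finset.mem_univ _, ?_, ?_⟩
  · rw [Matrix.rank_mul_eq_right_of_isUnit_det _ _ (isUnit_det_Tmat v), hr]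
  · intro i j
    rw [col_mul, col_mul, symp_Tv]
    exact hi i j

lemma card_filter_Tv (v : V n) (x : Fin k → ZMod 2) (z : V n) :
    ((fullRankIso n k).filter fun A => A.mulVec x = z).card
      = ((fullRankIso n k).filter fun A => A.mulVec x = Tv v z).card := by
  apply Finset.card_bij' (fun A _ => Tmat v * A) (fun A _ => Tmat v * A)
  · intro A _
    rw [← Matrix.mul_assoc, Tmat_mul_Tmat, Matrix.one_mul]
  · intro A _
    rw [← Matrix.mul_assoc, Tmat_mul_Tmat, Matrix.one_mul]
  · intro A hA
    rw [Finset.mem_filter] at hA ⊢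
    refine ⟨mem_fullRankIso_mul v A hA.1, ?_⟩
    rw [← Matrix.mulVec_mulVec, hA.2, Tmat_mulVec]
  · intro A hA
    rw [Finset.mem_filter] at hA ⊢
    refine ⟨mem_fullRankIso_mul v A hA.1, ?_⟩
    rw [← Matrix.mulVec_mulVec, hA.2, Tmat_mulVec, Tv_Tv]

lemma exists_symp_one (z : V n) (hz : z ≠ 0) : ∃ w : V n, symp z w = 1 := by
  have : ∃ r, z r ≠ 0 := by
    by_contra h
    push_neg at h
    exact hz (funext fun r => h r)
  obtain ⟨r, hr⟩ := this
  have hr1 : z r = 1 := (show ∀ a : ZMod 2, a ≠ 0 → a = 1 by decide) (z r) hr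
  refine ⟨fun s => if s = Sum.swap r then 1 else 0, ?_⟩
  rw [symp_eq]
  rw [Finset.sum_eq_single r]
  · simp [hr1]
  · intro b _ hb
    have : Sum.swap b ≠ Sum.swap r := fun h => hb (by rw [← Sum.swap_swap b, h, Sum.swap_swap])
    simp [this]
  · simp

end SympAux

namespace SympAux

variable {n k : ℕ}

lemma Tv_add (z w : V n) (h : symp z w = 1) : Tv (fun r => z r + w r) z = w := by
  funext r
  simp only [Tv]
  rw [symp_add_right, symp_self, zero_add, h, one_mul, ← add_assoc, add_self, zero_add]

lemma card_filter_const (x : Fin k → ZMod 2) {z z' : V n} (hz : z ≠ 0) (hz' : z' ≠ 0) :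
    ((fullRankIso n k).filter fun A => A.mulVec x = z).card
      = ((fullRankIso n k).filter fun A => A.mulVec x = z').card := by
  have key : ∀ a : ZMod 2, a ≠ 1 → a = 0 := by decide
  by_cases h1 : symp z z' = 1
  · rw [card_filter_Tv (fun r => z r + z' r) x z, Tv_add z z' h1]
  · obtain ⟨w1, hw1⟩ := exists_symp_one z hz
    obtain ⟨w2, hw2⟩ := exists_symp_one z' hz'
    have hex : ∃ w, symp z w = 1 ∧ symp z' w = 1 := by
      by_cases ha : symp z' w1 = 1
      · exact ⟨w1, hw1, ha⟩
      by_cases hb : symp z w2 = 1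
      · exact ⟨w2, hb, hw2⟩
      · refine ⟨fun r => w1 r + w2 r, ?_, ?_⟩
        · rw [symp_add_right, hw1, key _ hb, add_zero]
        · rw [symp_add_right, key _ ha, hw2, zero_add]
    obtain ⟨w, hzw, hz'w⟩ := hex
    rw [card_filter_Tv (fun r => z r + w r) x z, Tv_add z w hzw,
      card_filter_Tv (fun r => w r + z' r) x w, Tv_add w z' (by rw [symp_comm]; exact hz'w)]

lemma fullRankIso_nonempty : (fullRankIso n n).Nonempty := by
  refine ⟨Matrix.of (Sum.elim (fun _ _ => (0:ZMod 2)) (fun i j => if i = j then 1 else 0)), ?_⟩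
  set A0 : Matrix (Fin n ⊕ Fin n) (Fin n) (ZMod 2) :=
    Matrix.of (Sum.elim (fun _ _ => (0:ZMod 2)) (fun i j => if i = j then 1 else 0)) with hA0
  rw [fullRankIso, Finset.mem_filter]
  refine ⟨Finset.mem_univ _, ?_, ?_⟩
  · rw [rank_iff_ker]
    rw [Submodule.eq_bot_iff]
    intro y hy
    have h0 : A0.mulVec y = 0 := hy
    funext j
    have := congrFun h0 (Sum.inr j)
    simp only [Matrix.mulVec, dotProduct, hA0, Matrix.of_apply, Sum.elim_inr,
      Pi.zero_apply] at this
    rw [Finset.sum_eq_single j (by intro b _ hb; simp [Ne.symm hb]) (by simp)] at this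
    simpa using this
  · intro i j
    simp [symp, hA0]

lemma total_card (x : Fin n → ZMod 2) (hx : x ≠ 0) (z : V n) (hz : z ≠ 0) :
    (fullRankIso n n).card
      = (2 ^ (2 * n) - 1) * ((fullRankIso n n).filter fun A => A.mulVec x = z).card := by
  have hmap : ∀ A ∈ fullRankIso n n,
      A.mulVec x ∈ Finset.univ.filter (fun w : V n => w ≠ 0) := by
    intro A hA
    rw [fullRankIso, Finset.mem_filter] at hA
    simp only [Finset.mem_filter, Finset.mem_univ, true_and]
    exact mulVec_ne_zero A hA.2.1 x hx
  have hconst : ∀ w ∈ Finset.univ.filter (fun w : V n => w ≠ 0),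
      ((fullRankIso n n).filter fun A => A.mulVec x = w).card
        = ((fullRankIso n n).filter fun A => A.mulVec x = z).card := by
    intro w hw
    simp only [Finset.mem_filter, Finset.mem_univ, true_and] at hw
    exact card_filter_const x hw hz
  rw [Finset.card_eq_sum_card_fiberwise hmap, Finset.sum_congr rfl hconst,
    Finset.sum_const, smul_eq_mul]
  congr 1
  rw [Finset.filter_ne', Finset.card_erase_of_mem (Finset.mem_univ _), Finset.card_univ]
  congr 1
  rw [show Fintype.card (V n) = 2 ^ (2 * n) from ?_]
  simp [V, Fintype.card_fun, two_mul]

end SympAux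

/-- For a fixed nonzero `x ∈ F₂ⁿ` and a uniformly random full-rank isotropic matrix
`A ∈ F₂^{2n×n}`, the vector `A·x` is uniform over `F₂^{2n} \ {0}`: for every nonzero
`z`, `Pr[A·x = z] = 1/(2^{2n} - 1)`. -/
theorem stmt6 (n : ℕ) (hn : 1 ≤ n) (x : Fin n → ZMod 2) (hx : x ≠ 0)
    (z : (Fin n ⊕ Fin n) → ZMod 2) (hz : z ≠ 0) :
    (((fullRankIso n n).filter fun A => A.mulVec x = z).card : ℝ)
        / ((fullRankIso n n).card : ℝ)
      = 1 / ((2 : ℝ) ^ (2 * n) - 1) := by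
  obtain ⟨A0, hA0⟩ := SympAux.fullRankIso_nonempty (n := n)
  have ht := SympAux.total_card x hx z hz
  set c := ((fullRankIso n n).filter fun A => A.mulVec x = z).card with hc
  have hTpos : 0 < (fullRankIso n n).card := Finset.card_pos.mpr ⟨A0, hA0⟩
  have hcpos : 0 < c := by
    rcases Nat.eq_zero_or_pos c with h | h
    · rw [h, mul_zero] at ht; omega
    · exact h
  have hN : (1:ℕ) ≤ 2 ^ (2*n) := Nat.one_le_two_pow
  rw [ht]
  rw [Nat.cast_mul, Nat.cast_sub hN]
  push_cast
  have hcne : (c:ℝ) ≠ 0 := Nat.cast_ne_zero.mpr hcpos.ne'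
  rw [mul_comm, ← div_div, div_self hcne]
end

section
/- For every n ≥ 1 and every integer m with 1 ≤ m ≤ 2n, the number of isotropic m-dimensional subspaces of F₂^{2n} is at most 2^{−(m−1)(m−2)/2} times the number of all m-dimensional subspaces of F₂^{2n}; equivalently, a uniformly random m-dimensional subspace V of F₂^{2n} satisfies Pr[V ⊆ V^⊥] ≤ 2^{−(m−1)(m−2)/2}. -/
open scoped BigOperators Classical

namespace Stmt7Aux

open LinearMap Submodule Module

attribute [local instance] Fintype.ofFinite

variable (n : ℕ)

abbrev E (n : ℕ) := (Fin n ⊕ Fin n) → ZMod 2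

/-- `symp` as a bilinear form. -/
noncomputable def sB : LinearMap.BilinForm (ZMod 2) (E n) :=
  LinearMap.mk₂ (ZMod 2) symp
    (fun u u' v => by
      simp only [symp, Pi.add_apply, ← Finset.sum_add_distrib]
      exact Finset.sum_congr rfl fun i _ => by ring)
    (fun c u v => by
      simp only [symp, Pi.smul_apply, smul_eq_mul, Finset.mul_sum]
      exact Finset.sum_congr rfl fun i _ => by ring)
    (fun u v v' => by
      simp only [symp, Pi.add_apply, ← Finset.sum_add_distrib]
      exact Finset.sum_congr rfl fun i _ => by ring)
    (fun c u v => by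
      simp only [symp, Pi.smul_apply, smul_eq_mul, Finset.mul_sum]
      exact Finset.sum_congr rfl fun i _ => by ring)

@[simp] lemma sB_apply (u v : E n) : sB n u v = symp u v := rfl

lemma symp_comm (u v : E n) : symp u v = symp v u :=
  Finset.sum_congr rfl fun i _ => by ring

lemma sB_refl : (sB n).IsRefl := by
  intro u v h
  rwa [sB_apply, symp_comm] at h

lemma sB_nondegenerate : (sB n).Nondegenerate := by
  show LinearMap.Nondegenerate (sB n)
  rw [LinearMap.IsRefl.nondegenerate_iff_separatingLeft (sB_refl n)]
  intro u hu
  funext i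
  cases i with
  | inl j =>
    have h := hu (Pi.single (Sum.inr j) 1)
    rw [sB_apply] at h
    show u (Sum.inl j) = 0
    simpa [symp, Pi.single_apply] using h
  | inr j =>
    have h := hu (Pi.single (Sum.inl j) 1)
    rw [sB_apply] at h
    show u (Sum.inr j) = 0
    simpa [symp, Pi.single_apply] using h

lemma finrank_E : finrank (ZMod 2) (E n) = 2 * n := by
  rw [Module.finrank_fintype_fun_eq_card, Fintype.card_sum, Fintype.card_fin]
  ring

lemma card_submodule (W : Submodule (ZMod 2) (E n)) :
    Nat.card W = 2 ^ finrank (ZMod 2) W := by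
  rw [Nat.card_eq_fintype_card, card_eq_pow_finrank (K := ZMod 2), ZMod.card]

lemma card_orthogonal (W : Submodule (ZMod 2) (E n)) :
    Nat.card ((sB n).orthogonal W) = 2 ^ (2 * n - finrank (ZMod 2) W) := by
  have h2 := LinearMap.BilinForm.finrank_orthogonal (sB_nondegenerate n) W
  rw [finrank_E] at h2
  rw [card_submodule, h2]

/-- Tuples of linearly independent, pairwise-symplectically-orthogonal vectors. -/
def TT (k : ℕ) : Type :=
  {f : Fin k → E n // LinearIndependent (ZMod 2) f ∧ ∀ i j, symp (f i) (f j) = 0}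

instance (k : ℕ) : Finite (TT n k) := by
  unfold TT; infer_instance

lemma span_le_orthogonal {k : ℕ} (g : Fin k → E n)
    (hg : ∀ i j, symp (g i) (g j) = 0) :
    span (ZMod 2) (Set.range g) ≤ (sB n).orthogonal (span (ZMod 2) (Set.range g)) := by
  rw [Submodule.span_le]
  rintro x ⟨i, rfl⟩
  rw [SetLike.mem_coe, LinearMap.BilinForm.mem_orthogonal_iff]
  intro v hv
  have hker : span (ZMod 2) (Set.range g) ≤ LinearMap.ker ((sB n).flip (g i)) := by
    rw [Submodule.span_le]
    rintro y ⟨j, rfl⟩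
    simp [LinearMap.mem_ker, hg j i]
  exact hker hv

lemma step (k : ℕ) :
    Nat.card (TT n (k + 1)) ≤ Nat.card (TT n k) * (2 ^ (2 * n - k) - 2 ^ k) := by
  classical
  set F : TT n k → Set (E n) := fun g =>
    (((sB n).orthogonal (span (ZMod 2) (Set.range g.1)) : Set (E n)) \
      ((span (ZMod 2) (Set.range g.1) : Submodule (ZMod 2) (E n)) : Set (E n))) with hF
  have hfr : ∀ g : TT n k, finrank (ZMod 2) (span (ZMod 2) (Set.range g.1)) = k := by
    intro g
    rw [finrank_span_eq_card g.2.1, Fintype.card_fin]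
  have key : ∀ g : TT n k, Nat.card (F g) = 2 ^ (2 * n - k) - 2 ^ k := by
    intro g
    have hsub : ((span (ZMod 2) (Set.range g.1) : Submodule (ZMod 2) (E n)) : Set (E n)) ⊆
        (((sB n).orthogonal (span (ZMod 2) (Set.range g.1)) : Submodule (ZMod 2) (E n)) :
          Set (E n)) := span_le_orthogonal n g.1 g.2.2
    rw [hF]
    rw [Nat.card_coe_set_eq, Set.ncard_diff hsub]
    have h1 : (((sB n).orthogonal (span (ZMod 2) (Set.range g.1)) : Submodule (ZMod 2) (E n)) :
        Set (E n)).ncard = 2 ^ (2 * n - k) := by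
      rw [← Nat.card_coe_set_eq]
      have := card_orthogonal n (span (ZMod 2) (Set.range g.1))
      rw [hfr g] at this
      simpa using this
    have h2 : ((span (ZMod 2) (Set.range g.1) : Submodule (ZMod 2) (E n)) : Set (E n)).ncard
        = 2 ^ k := by
      rw [← Nat.card_coe_set_eq]
      have := card_submodule n (span (ZMod 2) (Set.range g.1))
      rw [hfr g] at this
      simpa using this
    rw [h1, h2]
  -- the injection
  have hres : ∀ f : TT n (k + 1), (LinearIndependent (ZMod 2) (Fin.init f.1)) ∧
      f.1 (Fin.last k) ∉ span (ZMod 2) (Set.range (Fin.init f.1)) := by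
    intro f
    have h := f.2.1
    rw [← Fin.snoc_init_self f.1] at h
    exact linearIndependent_fin_snoc.mp h
  let Φ : TT n (k + 1) → Σ g : TT n k, F g := fun f =>
    ⟨⟨Fin.init f.1, (hres f).1, fun i j => f.2.2 _ _⟩,
      ⟨f.1 (Fin.last k), by
        constructor
        · rw [SetLike.mem_coe, LinearMap.BilinForm.mem_orthogonal_iff]
          intro v hv
          have hker : span (ZMod 2) (Set.range (Fin.init f.1)) ≤
              LinearMap.ker ((sB n).flip (f.1 (Fin.last k))) := by
            rw [Submodule.span_le]
            rintro y ⟨j, rfl⟩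
            simp only [SetLike.mem_coe, LinearMap.mem_ker, LinearMap.flip_apply, sB_apply]
            exact f.2.2 (Fin.castSucc j) (Fin.last k)
          exact hker hv
        · exact fun hmem => (hres f).2 hmem⟩⟩
  have hΦ : Function.Injective Φ := by
    intro a b hab
    let Ψ : (Σ g : TT n k, F g) → (Fin (k + 1) → E n) := fun p =>
      Fin.snoc (α := fun _ => E n) p.1.1 (p.2 : E n)
    have h1 : Ψ (Φ a) = Ψ (Φ b) := by rw [hab]
    have h2 : ∀ f : TT n (k + 1), Ψ (Φ f) = f.1 := fun f => Fin.snoc_init_self f.1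
    exact Subtype.ext ((h2 a).symm.trans (h1.trans (h2 b)))
  calc Nat.card (TT n (k + 1)) ≤ Nat.card (Σ g : TT n k, F g) :=
        Nat.card_le_card_of_injective Φ hΦ
    _ = ∑ g : TT n k, Nat.card (F g) := by
        rw [Nat.card_eq_fintype_card, Fintype.card_sigma]
        exact Finset.sum_congr rfl fun g _ => (Nat.card_eq_fintype_card).symm
    _ = Nat.card (TT n k) * (2 ^ (2 * n - k) - 2 ^ k) := by
        simp only [key, Finset.sum_const, Finset.card_univ, smul_eq_mul,
          Nat.card_eq_fintype_card]

lemma count_TT (m : ℕ) :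
    Nat.card (TT n m) ≤ ∏ k ∈ Finset.range m, (2 ^ (2 * n - k) - 2 ^ k) := by
  induction m with
  | zero =>
    haveI : Subsingleton (TT n 0) :=
      ⟨fun a b => Subtype.ext (funext fun i => i.elim0)⟩
    have h : Nat.card (TT n 0) ≤ Nat.card Unit :=
      Nat.card_le_card_of_injective (fun _ => ())
        (fun a b _ => Subsingleton.elim a b)
    simpa using h
  | succ k ih =>
    rw [Finset.prod_range_succ]
    exact le_trans (step n k) (Nat.mul_le_mul_right _ ih)

lemma iso_iff {m : ℕ} (f : Fin m → E n) :
    (∀ i j, symp (f i) (f j) = 0) ↔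
      (∀ u ∈ span (ZMod 2) (Set.range f), ∀ v ∈ span (ZMod 2) (Set.range f), symp u v = 0) := by
  constructor
  · intro h u hu v hv
    have hv' := span_le_orthogonal n f h hv
    rw [LinearMap.BilinForm.mem_orthogonal_iff] at hv'
    exact hv' u hu
  · intro h i j
    exact h _ (Submodule.subset_span ⟨i, rfl⟩) _ (Submodule.subset_span ⟨j, rfl⟩)

lemma card_tuples (m : ℕ) (hm : 1 ≤ m) (Q : Submodule (ZMod 2) (E n) → Prop) :
    Nat.card {f : Fin m → E n //
        LinearIndependent (ZMod 2) f ∧ Q (span (ZMod 2) (Set.range f))}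
      = Nat.card {V : Submodule (ZMod 2) (E n) // finrank (ZMod 2) V = m ∧ Q V}
        * ∏ i ∈ Finset.range m, (2 ^ m - 2 ^ i) := by
  classical
  haveI : Nonempty (Fin m) := ⟨⟨0, hm⟩⟩
  set α := {f : Fin m → E n //
      LinearIndependent (ZMod 2) f ∧ Q (span (ZMod 2) (Set.range f))} with hα
  set β := {V : Submodule (ZMod 2) (E n) // finrank (ZMod 2) V = m ∧ Q V} with hβ
  let π : α → β := fun f =>
    ⟨span (ZMod 2) (Set.range f.1), by
      rw [finrank_span_eq_card f.2.1, Fintype.card_fin], f.2.2⟩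
  have hfib : ∀ V : β, Nat.card {f : α // π f = V}
      = ∏ i ∈ Finset.range m, (2 ^ m - 2 ^ i) := by
    intro V
    have hVrank : finrank (ZMod 2) V.1 = m := V.2.1
    -- the equivalence with linearly independent tuples in V
    let e : {f : α // π f = V} ≃ {g : Fin m → V.1 // LinearIndependent (ZMod 2) g} :=
      { toFun := fun x =>
          ⟨fun i => ⟨x.1.1 i, by
            have hx : span (ZMod 2) (Set.range x.1.1) = V.1 := congrArg Subtype.val x.2
            exact hx ▸ Submodule.subset_span ⟨i, rfl⟩⟩,
            LinearIndependent.of_comp V.1.subtype x.1.2.1⟩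
        invFun := fun y => by
          have hli : LinearIndependent (ZMod 2) (fun i => ((y.1 i : E n))) :=
            y.2.map' V.1.subtype (Submodule.ker_subtype V.1)
          have hspan : span (ZMod 2) (Set.range fun i => ((y.1 i : E n))) = V.1 := by
            have h1 : span (ZMod 2) (Set.range y.1) = ⊤ :=
              y.2.span_eq_top_of_card_eq_finrank (by rw [Fintype.card_fin, hVrank])
            have h2 : (Set.range fun i => ((y.1 i : E n)))
                = V.1.subtype '' Set.range y.1 := by
              rw [← Set.range_comp]; rfl
            rw [h2, Submodule.span_image, h1, Submodule.map_subtype_top]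
          exact ⟨⟨fun i => (y.1 i : E n), hli, by rw [hspan]; exact V.2.2⟩,
            Subtype.ext hspan⟩
        left_inv := fun x => Subtype.ext (Subtype.ext rfl)
        right_inv := fun y => Subtype.ext (funext fun i => Subtype.ext rfl) }
    rw [Nat.card_congr e]
    have := card_linearIndependent (K := ZMod 2) (V := V.1)
      (k := m) (by rw [hVrank])
    rw [this, ZMod.card, hVrank]
    rw [Finset.prod_range fun i => 2 ^ m - 2 ^ i]
  -- fiberwise counting
  have hcard : Fintype.card α = ∑ V : β, Fintype.card {f : α // π f = V} := by
    rw [← Finset.card_univ,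
      Finset.card_eq_sum_card_fiberwise (fun x _ => Finset.mem_univ (π x))]
    exact Finset.sum_congr rfl fun V _ => (Fintype.card_subtype fun f => π f = V).symm
  rw [Nat.card_eq_fintype_card, hcard]
  have : ∀ V : β, Fintype.card {f : α // π f = V}
      = ∏ i ∈ Finset.range m, (2 ^ m - 2 ^ i) := by
    intro V
    rw [← Nat.card_eq_fintype_card]
    exact hfib V
  simp only [this, Finset.sum_const, Finset.card_univ, smul_eq_mul, Nat.card_eq_fintype_card]

end Stmt7Aux

/-- For `1 ≤ m ≤ 2n`, the number of isotropic `m`-dimensional subspaces of `F₂^{2n}`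
(i.e. those with `V ⊆ V^⊥`, equivalently `symp u v = 0` for all `u, v ∈ V`) is at most
`2^{-(m-1)(m-2)/2}` times the number of all `m`-dimensional subspaces; equivalently, a
uniformly random `m`-dimensional subspace is isotropic with probability at most
`2^{-(m-1)(m-2)/2}`. -/
theorem stmt7 (n : ℕ) (hn : 1 ≤ n) (m : ℕ) (hm1 : 1 ≤ m) (hm2 : m ≤ 2 * n) :
    (Nat.card {V : Submodule (ZMod 2) ((Fin n ⊕ Fin n) → ZMod 2) //
        Module.finrank (ZMod 2) V = m ∧ ∀ u ∈ V, ∀ v ∈ V, symp u v = 0} : ℝ)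
      ≤ (2 : ℝ) ^ (-((((m - 1) * (m - 2) : ℕ) : ℝ) / 2)) *
        (Nat.card {V : Submodule (ZMod 2) ((Fin n ⊕ Fin n) → ZMod 2) //
          Module.finrank (ZMod 2) V = m} : ℝ) := by
  classical
  set A : ℕ := Nat.card {V : Submodule (ZMod 2) ((Fin n ⊕ Fin n) → ZMod 2) //
      Module.finrank (ZMod 2) V = m ∧ ∀ u ∈ V, ∀ v ∈ V, symp u v = 0} with hA
  set N : ℕ := Nat.card {V : Submodule (ZMod 2) ((Fin n ⊕ Fin n) → ZMod 2) //
      Module.finrank (ZMod 2) V = m} with hN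
  set Bm : ℕ := ∏ i ∈ Finset.range m, (2 ^ m - 2 ^ i) with hBm
  set Piso : ℕ := ∏ k ∈ Finset.range m, (2 ^ (2 * n - k) - 2 ^ k) with hPiso
  set Pall : ℕ := ∏ k ∈ Finset.range m, (2 ^ (2 * n) - 2 ^ k) with hPall
  clear_value A N Bm Piso Pall
  have hBmpos : 0 < Bm := by
    rw [hBm]
    apply Finset.prod_pos
    intro i hi
    have h1 : (2:ℕ) ^ i < 2 ^ m := Nat.pow_lt_pow_right one_lt_two (Finset.mem_range.mp hi)
    omega
  -- the isotropic tuple count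
  have hiso : Nat.card {f : Fin m → ((Fin n ⊕ Fin n) → ZMod 2) //
      LinearIndependent (ZMod 2) f ∧ ∀ i j, symp (f i) (f j) = 0} = A * Bm := by
    rw [hA, hBm]
    refine Eq.trans (Nat.card_congr (Equiv.subtypeEquivRight fun f =>
      and_congr_right fun _ => Stmt7Aux.iso_iff n f)) ?_
    exact Stmt7Aux.card_tuples n m hm1 (fun V => ∀ u ∈ V, ∀ v ∈ V, symp u v = 0)
  have hisoTT : Nat.card (Stmt7Aux.TT n m) = A * Bm := hiso
  have hisoBound : A * Bm ≤ Piso := by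
    rw [hPiso, ← hisoTT]; exact Stmt7Aux.count_TT n m
  -- the total tuple count
  have htot : N * Bm = Pall := by
    have h1 := Stmt7Aux.card_tuples n m hm1 (fun _ => True)
    have h2 : Nat.card {f : Fin m → ((Fin n ⊕ Fin n) → ZMod 2) //
        LinearIndependent (ZMod 2) f ∧ True}
        = Nat.card {f : Fin m → ((Fin n ⊕ Fin n) → ZMod 2) //
          LinearIndependent (ZMod 2) f} :=
      Nat.card_congr (Equiv.subtypeEquivRight fun f => by simp)
    have h3 : Nat.card {V : Submodule (ZMod 2) ((Fin n ⊕ Fin n) → ZMod 2) //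
        Module.finrank (ZMod 2) V = m ∧ True} = N := by
      rw [hN]
      exact Nat.card_congr (Equiv.subtypeEquivRight fun V => by simp)
    have h4 : Nat.card {f : Fin m → ((Fin n ⊕ Fin n) → ZMod 2) //
        LinearIndependent (ZMod 2) f} = Pall := by
      have h5 := card_linearIndependent (K := ZMod 2) (V := (Fin n ⊕ Fin n) → ZMod 2)
        (k := m) (by rw [Stmt7Aux.finrank_E]; exact hm2)
      rw [ZMod.card, Stmt7Aux.finrank_E] at h5
      rw [h5, hPall]
      exact Fin.prod_univ_eq_prod_range (fun k => 2 ^ (2 * n) - 2 ^ k) m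
    rw [← h4, ← h2, h1, h3, ← hBm]
  -- the numeric inequality
  obtain ⟨s, h2s, hkey⟩ : ∃ s : ℕ, s * 2 = m * (m - 1) ∧ 2 ^ s * Piso ≤ Pall := by
    refine ⟨∑ k ∈ Finset.range m, k, Finset.sum_range_id_mul_two m, ?_⟩
    rw [← Finset.prod_pow_eq_pow_sum, hPiso, ← Finset.prod_mul_distrib, hPall]
    apply Finset.prod_le_prod'
    intro k hk
    have hk2 : k ≤ 2 * n := le_trans (le_of_lt (Finset.mem_range.mp hk)) hm2
    have e1 : 2 ^ k * (2 ^ (2 * n - k) - 2 ^ k) = 2 ^ (2 * n) - 2 ^ (k + k) := by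
      rw [Nat.mul_sub, ← pow_add, ← pow_add, Nat.add_sub_cancel' hk2]
    rw [e1]
    exact Nat.sub_le_sub_left (Nat.pow_le_pow_right (by norm_num) (Nat.le_add_right k k)) _
  set e : ℕ := (m - 1) * (m - 2) / 2 with he
  have hev : Even ((m - 1) * (m - 2)) := by
    rcases Nat.even_or_odd (m - 1) with h | h
    · exact h.mul_right _
    · have h2 : Even (m - 2) := by
        have h3 := Nat.Odd.sub_odd h odd_one
        have h4 : m - 1 - 1 = m - 2 := by rw [Nat.sub_sub]
        rwa [h4] at h3
      exact h2.mul_left _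
  have hce : 2 * e = (m - 1) * (m - 2) := by
    rw [he]; exact Nat.two_mul_div_two_of_even hev
  clear_value e
  have hes : e ≤ s := by
    have hmul : (m - 1) * (m - 2) ≤ m * (m - 1) := by
      rw [mul_comm m (m - 1)]
      exact Nat.mul_le_mul_left _ (Nat.sub_le m 2)
    have h6 : 2 * e ≤ 2 * s := by
      rw [hce, ← Nat.mul_comm s 2, h2s]; exact hmul
    exact Nat.le_of_mul_le_mul_left h6 Nat.zero_lt_two
  have hfinal : 2 ^ e * A ≤ N := by
    have hchain : (2 ^ e * A) * Bm ≤ N * Bm := by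
      calc (2 ^ e * A) * Bm = 2 ^ e * (A * Bm) := by ring
        _ ≤ 2 ^ e * Piso := Nat.mul_le_mul_left _ hisoBound
        _ ≤ 2 ^ s * Piso := Nat.mul_le_mul_right _ (Nat.pow_le_pow_right (by norm_num) hes)
        _ ≤ Pall := hkey
        _ = N * Bm := htot.symm
    exact Nat.le_of_mul_le_mul_right hchain hBmpos
  -- pass to the reals
  have hcast : (2:ℝ) ^ e * (A:ℝ) ≤ (N:ℝ) := by exact_mod_cast hfinal
  have hexp : (2 : ℝ) ^ (-((((m - 1) * (m - 2) : ℕ) : ℝ) / 2)) = ((2:ℝ) ^ e)⁻¹ := by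
    have h7 : ((((m - 1) * (m - 2) : ℕ) : ℝ) / 2) = (e : ℝ) := by
      rw [← hce]; push_cast; ring
    rw [h7, ← Real.rpow_natCast (2:ℝ) e, ← Real.rpow_neg (by norm_num)]
  rw [hexp, inv_mul_eq_div, le_div_iff₀ (by positivity)]
  nlinarith [hcast]
end

section
/- Let n ≥ 1, let M ≥ n be an integer, and let ε ∈ (0,1). If T is a uniformly random matrix in F₂^{M×n}, then Pr[rank(T) < (1−ε)·n] ≤ 2^{n − ε²·n²}. -/
open scoped BigOperators Classical
open Matrix Submodule Module

noncomputable def Cmat (n d : ℕ) (s : {s : Finset (Fin n) // s.card = d})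
    (D : Matrix (Fin d) (Fin (n - d)) (ZMod 2)) : Matrix (Fin d) (Fin n) (ZMod 2) :=
  fun j i =>
    if hi : i ∈ s.1 then (if (s.1.orderIsoOfFin s.2).symm ⟨i, hi⟩ = j then 1 else 0)
    else D j ((s.1ᶜ.orderIsoOfFin (by simp [Finset.card_compl, s.2])).symm ⟨i, by simpa using hi⟩)

lemma key (n M d : ℕ) (hd : d ≤ n) :
    (Finset.univ.filter fun T : Matrix (Fin M) (Fin n) (ZMod 2) => T.rank ≤ d).card
      ≤ 2 ^ n * (2 ^ (M * d) * 2 ^ (d * (n - d))) := by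
  classical
  let φ : ({s : Finset (Fin n) // s.card = d} ×
      Matrix (Fin M) (Fin d) (ZMod 2) × Matrix (Fin d) (Fin (n - d)) (ZMod 2)) →
      Matrix (Fin M) (Fin n) (ZMod 2) :=
    fun p => p.2.1 * Cmat n d p.1 p.2.2
  have hsurj : Set.SurjOn φ ↑(Finset.univ : Finset ({s : Finset (Fin n) // s.card = d} × Matrix (Fin M) (Fin d) (ZMod 2) × Matrix (Fin d) (Fin (n - d)) (ZMod 2)))
      ((Finset.univ.filter fun T : Matrix (Fin M) (Fin n) (ZMod 2) => T.rank ≤ d) : Finset _) := by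
    intro T hT
    simp only [Finset.coe_filter, Set.mem_setOf_eq, Finset.mem_univ, true_and] at hT
    -- column space
    obtain ⟨b, hbsub, hbspan, hbind⟩ := exists_linearIndependent (ZMod 2) (Set.range Tᵀ)
    haveI : Fintype b := ((Set.finite_range Tᵀ).subset hbsub).fintype
    have hbcard : b.toFinset.card ≤ d := by
      have h1 := finrank_span_set_eq_card hbind
      rw [hbspan] at h1
      have h2 : T.rank = finrank (ZMod 2) (span (ZMod 2) (Set.range Tᵀ)) := by
        rw [Matrix.rank, Matrix.range_mulVecLin]
        rfl
      omega
    -- index choice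
    have hg : ∀ x : b, ∃ i : Fin n, Tᵀ i = (x : Fin M → ZMod 2) := fun x => hbsub x.2
    choose g hgspec using hg
    have hginj : Function.Injective g := by
      intro x y hxy
      apply Subtype.ext
      rw [← hgspec x, ← hgspec y, hxy]
    set s₁ : Finset (Fin n) := Finset.univ.image g with hs₁
    have hs₁card : s₁.card ≤ d := by
      rw [hs₁, Finset.card_image_of_injective _ hginj, Finset.card_univ]
      simpa [Set.toFinset_card] using hbcard
    obtain ⟨s, hs₁s, hscard⟩ := Finset.exists_superset_card_eq hs₁card (by simpa using hd)
    set e := s.orderIsoOfFin hscard with he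
    set v : Fin d → (Fin M → ZMod 2) := fun j => Tᵀ ((e j : Fin n)) with hv
    have hcols : ∀ i : Fin n, Tᵀ i ∈ span (ZMod 2) (Set.range v) := by
      intro i
      have h1 : Tᵀ i ∈ span (ZMod 2) (Set.range Tᵀ) := subset_span ⟨i, rfl⟩
      rw [← hbspan] at h1
      refine span_le.2 ?_ h1
      intro x hx
      have hmem : g ⟨x, hx⟩ ∈ s := hs₁s (by simp [hs₁])
      obtain ⟨j, hj⟩ := e.surjective ⟨g ⟨x, hx⟩, hmem⟩
      apply subset_span
      refine ⟨j, ?_⟩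
      rw [hv]
      simp only [hj]
      exact hgspec ⟨x, hx⟩
    have hc : ∀ i : Fin n, ∃ c : Fin d → ZMod 2, ∑ j, c j • v j = Tᵀ i := by
      intro i
      exact (mem_span_range_iff_exists_fun (ZMod 2)).1 (hcols i)
    choose c hcspec using hc
    have fc := (sᶜ.orderIsoOfFin (show sᶜ.card = n - d by simp [Finset.card_compl, hscard]))
    refine ⟨⟨⟨s, hscard⟩, fun a j => T a (e j), fun j m => c (((sᶜ.orderIsoOfFin (show sᶜ.card = n - d by simp [Finset.card_compl, hscard])) m : Fin n)) j⟩,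
      Finset.mem_coe.2 (Finset.mem_univ _), ?_⟩
    show (_ * Cmat n d ⟨s, hscard⟩ _) = T
    ext a i
    rw [Matrix.mul_apply]
    by_cases hi : i ∈ s
    · rw [Finset.sum_eq_single (e.symm ⟨i, hi⟩)]
      · simp [Cmat, hi, ← he]
      · intro j _ hj
        simp [Cmat, hi, ← he, Ne.symm hj]
      · simp
    · have hi' : i ∈ sᶜ := by simpa using hi
      set fc := (sᶜ.orderIsoOfFin (show sᶜ.card = n - d by simp [Finset.card_compl, hscard])) with hfc
      have hC : ∀ j, Cmat n d ⟨s, hscard⟩ (fun j m => c ((fc m : Fin n)) j) j i = c i j := by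
        intro j
        simp only [Cmat]
        rw [dif_neg hi]
        show c ((fc (fc.symm ⟨i, hi'⟩)).1 : Fin n) j = c i j
        rw [OrderIso.apply_symm_apply]
      simp_rw [hC]
      have hh := congrFun (hcspec i) a
      simp only [Finset.sum_apply, Pi.smul_apply, smul_eq_mul] at hh
      calc ∑ j : Fin d, T a (e j : Fin n) * c i j
          = ∑ j : Fin d, c i j * v j a := by
            refine Finset.sum_congr rfl fun j _ => ?_
            rw [mul_comm]; rfl
        _ = Tᵀ i a := hh
        _ = T a i := rfl
  have hcard := Finset.card_le_card_of_surjOn φ hsurj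
  have hdom : (Finset.univ : Finset ({s : Finset (Fin n) // s.card = d} ×
      Matrix (Fin M) (Fin d) (ZMod 2) × Matrix (Fin d) (Fin (n - d)) (ZMod 2))).card
      = n.choose d * (2 ^ (M * d) * 2 ^ (d * (n - d))) := by
    have h1 : Fintype.card (Matrix (Fin M) (Fin d) (ZMod 2)) = 2 ^ (M * d) := by
      rw [show Fintype.card (Matrix (Fin M) (Fin d) (ZMod 2))
          = Fintype.card (Fin M → Fin d → ZMod 2) from rfl]
      simp only [Fintype.card_fun, Fintype.card_fin, ZMod.card]
      rw [← pow_mul, Nat.mul_comm]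
    have h2 : Fintype.card (Matrix (Fin d) (Fin (n - d)) (ZMod 2)) = 2 ^ (d * (n - d)) := by
      rw [show Fintype.card (Matrix (Fin d) (Fin (n - d)) (ZMod 2))
          = Fintype.card (Fin d → Fin (n - d) → ZMod 2) from rfl]
      simp only [Fintype.card_fun, Fintype.card_fin, ZMod.card]
      rw [← pow_mul, Nat.mul_comm]
    rw [Finset.card_univ, Fintype.card_prod, Fintype.card_prod, h1, h2,
      Fintype.card_finset_len, Fintype.card_fin]
  have hchoose : n.choose d ≤ 2 ^ n := by
    calc n.choose d ≤ ∑ m ∈ Finset.range (n + 1), n.choose m :=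
          Finset.single_le_sum (fun m _ => Nat.zero_le _) (Finset.mem_range.2 (by omega))
      _ = 2 ^ n := Nat.sum_range_choose n
  rw [hdom] at hcard
  exact le_trans hcard (Nat.mul_le_mul_right _ hchoose)

/-- For `M ≥ n` and `ε ∈ (0,1)`, a uniformly random matrix `T ∈ F₂^{M×n}` satisfies
`Pr[rank(T) < (1-ε)·n] ≤ 2^{n - ε²·n²}`. -/
theorem stmt11 (n M : ℕ) (hn : 1 ≤ n) (hM : n ≤ M) (ε : ℝ) (hε0 : 0 < ε) (hε1 : ε < 1) :
    (((Finset.univ.filter fun T : Matrix (Fin M) (Fin n) (ZMod 2) =>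
          ((T.rank : ℝ) < (1 - ε) * n)).card : ℝ)
        / ((Finset.univ : Finset (Matrix (Fin M) (Fin n) (ZMod 2))).card : ℝ))
      ≤ (2 : ℝ) ^ ((n : ℝ) - ε ^ 2 * (n : ℝ) ^ 2) := by
  have hn' : (1:ℝ) ≤ n := by exact_mod_cast hn
  have hMr : (n:ℝ) ≤ M := by exact_mod_cast hM
  have hx : (0:ℝ) < (1 - ε) * n := by nlinarith
  set d : ℕ := ⌈(1 - ε) * (n:ℝ)⌉₊ - 1 with hdd
  have hceil : 1 ≤ ⌈(1 - ε) * (n:ℝ)⌉₊ := Nat.ceil_pos.2 hx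
  have hdlt : (d:ℝ) < (1 - ε) * n := Nat.lt_ceil.1 (by omega)
  have hdn' : d < n := by
    have h : (d:ℝ) < n := by nlinarith
    exact_mod_cast h
  have hsub : (Finset.univ.filter fun T : Matrix (Fin M) (Fin n) (ZMod 2) =>
      ((T.rank : ℝ) < (1 - ε) * n)) ⊆
      (Finset.univ.filter fun T : Matrix (Fin M) (Fin n) (ZMod 2) => T.rank ≤ d) := by
    intro T hT
    simp only [Finset.mem_filter, Finset.mem_univ, true_and] at hT ⊢
    have := Nat.lt_ceil.2 hT
    omega
  have hcard := le_trans (Finset.card_le_card hsub) (key n M d hdn'.le)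
  have hcardR : ((Finset.univ.filter fun T : Matrix (Fin M) (Fin n) (ZMod 2) =>
      ((T.rank : ℝ) < (1 - ε) * n)).card : ℝ) ≤ 2 ^ (n + (M * d + d * (n - d))) := by
    calc ((Finset.univ.filter fun T : Matrix (Fin M) (Fin n) (ZMod 2) =>
          ((T.rank : ℝ) < (1 - ε) * n)).card : ℝ)
        ≤ ((2 ^ n * (2 ^ (M * d) * 2 ^ (d * (n - d))) : ℕ) : ℝ) := by exact_mod_cast hcard
      _ = 2 ^ (n + (M * d + d * (n - d))) := by push_cast [pow_add]; ring
  have huniv : ((Finset.univ : Finset (Matrix (Fin M) (Fin n) (ZMod 2))).card : ℝ)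
      = 2 ^ (M * n) := by
    rw [Finset.card_univ, show Fintype.card (Matrix (Fin M) (Fin n) (ZMod 2))
        = Fintype.card (Fin M → Fin n → ZMod 2) from rfl]
    simp only [Fintype.card_fun, Fintype.card_fin, ZMod.card]
    push_cast [← pow_mul]
    ring
  rw [huniv]
  have h2 : (0:ℝ) < (2:ℝ) ^ (M * n) := by positivity
  have step1 : ((Finset.univ.filter fun T : Matrix (Fin M) (Fin n) (ZMod 2) =>
      ((T.rank : ℝ) < (1 - ε) * n)).card : ℝ) / (2:ℝ) ^ (M * n)
      ≤ (2:ℝ) ^ (n + (M * d + d * (n - d))) / (2:ℝ) ^ (M * n) := by gcongr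
  refine le_trans step1 ?_
  have step2 : (2:ℝ) ^ (n + (M * d + d * (n - d))) / (2:ℝ) ^ (M * n)
      = (2:ℝ) ^ (((n + (M * d + d * (n - d)) : ℕ) : ℝ) - ((M * n : ℕ) : ℝ)) := by
    rw [← Real.rpow_natCast 2 (n + (M * d + d * (n - d))), ← Real.rpow_natCast 2 (M * n),
      ← Real.rpow_sub two_pos]
  rw [step2]
  apply Real.rpow_le_rpow_of_exponent_le one_le_two
  have hk : ε * n < (n:ℝ) - d := by nlinarith
  have hk2 : (ε * n) ^ 2 < ((n:ℝ) - d) ^ 2 := by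
    have h0 : (0:ℝ) ≤ ε * n := by positivity
    nlinarith
  have hnd : ((n - d : ℕ) : ℝ) = (n:ℝ) - d := by
    push_cast [Nat.cast_sub hdn'.le]; ring
  push_cast [hnd]
  nlinarith [mul_nonneg (by linarith : (0:ℝ) ≤ (n:ℝ) - d) (by linarith : (0:ℝ) ≤ (M:ℝ) - n)]
end

section
/- Let n ≥ 2. Sample A uniformly at random from the full-rank isotropic matrices in F₂^{2n×(n−1)}, let S = im(A) be its column span, sample u uniformly from S^⊥ \ S, and then sample B uniformly from the set of matrices in F₂^{2n×n} whose columns form a basis of S + span{u}. Then B is uniformly distributed over the full-rank isotropic matrices in F₂^{2n×n}. -/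
open scoped BigOperators Classical

/-- The column span `im(A)` of a matrix `A` with `2n` rows. -/
def colSpan {n k : ℕ} (A : Matrix (Fin n ⊕ Fin n) (Fin k) (ZMod 2)) :
    Submodule (ZMod 2) ((Fin n ⊕ Fin n) → ZMod 2) :=
  Submodule.span (ZMod 2) (Set.range fun i : Fin k => fun r => A r i)

/-- The set `S^⊥ \ S` for `S = im(A)`: vectors symplectically orthogonal to `im(A)`
but not in `im(A)`. -/
noncomputable def uSet {n k : ℕ} (A : Matrix (Fin n ⊕ Fin n) (Fin k) (ZMod 2)) :
    Finset ((Fin n ⊕ Fin n) → ZMod 2) :=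
  Finset.univ.filter fun u =>
    (∀ v ∈ colSpan A, symp u v = 0) ∧ u ∉ colSpan A

/-- The set of matrices in `F₂^{2n×n}` whose columns form a basis of
`im(A) + span{u}`. -/
noncomputable def basisSet {n k : ℕ} (A : Matrix (Fin n ⊕ Fin n) (Fin k) (ZMod 2))
    (u : (Fin n ⊕ Fin n) → ZMod 2) :
    Finset (Matrix (Fin n ⊕ Fin n) (Fin n) (ZMod 2)) :=
  Finset.univ.filter fun B =>
    LinearIndependent (ZMod 2) (fun i : Fin n => fun r => B r i) ∧
    Submodule.span (ZMod 2) (Set.range fun i : Fin n => fun r => B r i)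
      = colSpan A ⊔ Submodule.span (ZMod 2) {u}

open Module

lemma symp_comm {n : ℕ} (u v : (Fin n ⊕ Fin n) → ZMod 2) : symp u v = symp v u := by
  unfold symp; congr 1; ext i; ring

lemma symp_self {n : ℕ} (u : (Fin n ⊕ Fin n) → ZMod 2) : symp u u = 0 := by
  unfold symp
  refine Finset.sum_eq_zero fun i _ => ?_
  have : ∀ a b : ZMod 2, a * b + b * a = 0 := by decide
  exact this _ _

noncomputable def sympBilin (n : ℕ) :
    LinearMap.BilinForm (ZMod 2) ((Fin n ⊕ Fin n) → ZMod 2) :=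
  LinearMap.mk₂ (ZMod 2) symp
    (fun u u' v => by unfold symp; rw [← Finset.sum_add_distrib]; congr 1; ext i; simp; ring)
    (fun c u v => by unfold symp; rw [Finset.smul_sum]; congr 1; ext i; simp; ring)
    (fun u v v' => by unfold symp; rw [← Finset.sum_add_distrib]; congr 1; ext i; simp; ring)
    (fun c u v => by unfold symp; rw [Finset.smul_sum]; congr 1; ext i; simp; ring)

@[simp] lemma sympBilin_apply {n : ℕ} (u v : (Fin n ⊕ Fin n) → ZMod 2) :
    sympBilin n u v = symp u v := rfl

lemma symp_single_inr {n : ℕ} (u : (Fin n ⊕ Fin n) → ZMod 2) (i : Fin n) :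
    symp u (Pi.single (Sum.inr i) 1) = u (Sum.inl i) := by
  unfold symp
  simp [Pi.single_apply]

lemma symp_single_inl {n : ℕ} (u : (Fin n ⊕ Fin n) → ZMod 2) (i : Fin n) :
    symp u (Pi.single (Sum.inl i) 1) = u (Sum.inr i) := by
  unfold symp
  simp [Pi.single_apply]

lemma sympBilin_nondeg (n : ℕ) : (sympBilin n).Nondegenerate := by
  refine ⟨fun u hu => ?_, fun u hu => ?_⟩
  · ext r
    cases r with
    | inl i => simpa [symp_single_inr] using hu (Pi.single (Sum.inr i) 1)
    | inr i => simpa [symp_single_inl] using hu (Pi.single (Sum.inl i) 1)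
  · ext r
    cases r with
    | inl i =>
      have := hu (Pi.single (Sum.inr i) 1)
      rw [sympBilin_apply, symp_comm, symp_single_inr] at this
      simpa using this
    | inr i =>
      have := hu (Pi.single (Sum.inl i) 1)
      rw [sympBilin_apply, symp_comm, symp_single_inl] at this
      simpa using this

lemma sympBilin_refl (n : ℕ) : (sympBilin n).IsRefl := by
  intro u v h; rwa [sympBilin_apply, symp_comm]

lemma finrank_V (n : ℕ) : finrank (ZMod 2) ((Fin n ⊕ Fin n) → ZMod 2) = 2 * n := by
  simp [Module.finrank_fintype_fun_eq_card]
  ring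

lemma span_symp_zero {n : ℕ} {s : Set ((Fin n ⊕ Fin n) → ZMod 2)}
    (h : ∀ x ∈ s, ∀ y ∈ s, symp x y = 0) :
    ∀ x ∈ Submodule.span (ZMod 2) s, ∀ y ∈ Submodule.span (ZMod 2) s, symp x y = 0 := by
  have key : Submodule.span (ZMod 2) s ≤ (sympBilin n).orthogonal (Submodule.span (ZMod 2) s) := by
    rw [Submodule.span_le]
    intro g hg
    rw [SetLike.mem_coe, LinearMap.BilinForm.mem_orthogonal_iff]
    intro x hx
    have : Submodule.span (ZMod 2) s ≤ LinearMap.ker ((sympBilin n).flip g) := by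
      rw [Submodule.span_le]
      intro y hy
      simp only [SetLike.mem_coe, LinearMap.mem_ker, LinearMap.flip_apply, sympBilin_apply]
      exact h y hy g hg
    exact this hx
  intro x hx y hy
  have := key hy
  rw [LinearMap.BilinForm.mem_orthogonal_iff] at this
  simpa using this x hx

-- card of a submodule over ZMod 2
lemma card_filter_mem {n : ℕ} (W : Submodule (ZMod 2) ((Fin n ⊕ Fin n) → ZMod 2)) :
    (Finset.univ.filter (· ∈ W)).card = 2 ^ finrank (ZMod 2) W := by
  rw [← Fintype.card_subtype]
  rw [card_eq_pow_finrank (K := ZMod 2) (V := W)]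
  simp

lemma rank_eq_finrank_colSpan {n k : ℕ} (A : Matrix (Fin n ⊕ Fin n) (Fin k) (ZMod 2)) :
    A.rank = finrank (ZMod 2) (colSpan A) := by
  rw [Matrix.rank_eq_finrank_span_cols]
  congr 2

lemma li_of_rank {n k : ℕ} {A : Matrix (Fin n ⊕ Fin n) (Fin k) (ZMod 2)}
    (h : A.rank = k) : LinearIndependent (ZMod 2) (fun i : Fin k => fun r => A r i) := by
  rw [linearIndependent_iff_card_eq_finrank_span]
  rw [rank_eq_finrank_colSpan] at h
  simp [Set.finrank, colSpan] at h ⊢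
  exact h.symm

lemma rank_of_li {n k : ℕ} {A : Matrix (Fin n ⊕ Fin n) (Fin k) (ZMod 2)}
    (h : LinearIndependent (ZMod 2) (fun i : Fin k => fun r => A r i)) : A.rank = k := by
  rw [linearIndependent_iff_card_eq_finrank_span] at h
  rw [rank_eq_finrank_colSpan]
  simp [Set.finrank, colSpan] at h ⊢
  exact h.symm

noncomputable def liCount {n : ℕ} (k : ℕ) (W : Submodule (ZMod 2) ((Fin n ⊕ Fin n) → ZMod 2)) : ℕ :=
  Fintype.card {t : Fin k → W // LinearIndependent (ZMod 2) t}

lemma li_coe_iff {n k : ℕ} (W : Submodule (ZMod 2) ((Fin n ⊕ Fin n) → ZMod 2))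
    (t : Fin k → W) :
    LinearIndependent (ZMod 2) (fun i => (t i : (Fin n ⊕ Fin n) → ZMod 2)) ↔
      LinearIndependent (ZMod 2) t := by
  have := W.subtype.linearIndependent_iff (W.ker_subtype) (v := t)
  simpa [Function.comp_def] using this

lemma filter_card_eq_liCount {n k : ℕ} (W : Submodule (ZMod 2) ((Fin n ⊕ Fin n) → ZMod 2)) :
    (Finset.univ.filter fun B : Matrix (Fin n ⊕ Fin n) (Fin k) (ZMod 2) =>
        LinearIndependent (ZMod 2) (fun i : Fin k => fun r => B r i) ∧
        ∀ i : Fin k, (fun r => B r i) ∈ W).card = liCount k W := by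
  rw [← Fintype.card_subtype, liCount]
  apply Fintype.card_congr
  refine
    { toFun := fun B => ⟨fun i => ⟨fun r => B.1 r i, B.2.2 i⟩, ?_⟩
      invFun := fun t => ⟨fun r i => (t.1 i : (Fin n ⊕ Fin n) → ZMod 2) r, ?_, ?_⟩
      left_inv := fun B => rfl
      right_inv := fun t => rfl }
  · rw [← li_coe_iff]
    exact B.2.1
  · rw [li_coe_iff]; exact t.2
  · exact fun i => (t.1 i).2

lemma liCount_congr {n k : ℕ} {W W' : Submodule (ZMod 2) ((Fin n ⊕ Fin n) → ZMod 2)}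
    (h : finrank (ZMod 2) W = finrank (ZMod 2) W') : liCount k W = liCount k W' := by
  obtain ⟨e⟩ := FiniteDimensional.nonempty_linearEquiv_of_finrank_eq h
  apply Fintype.card_congr
  refine
    { toFun := fun t => ⟨fun i => e (t.1 i), ?_⟩
      invFun := fun t => ⟨fun i => e.symm (t.1 i), ?_⟩
      left_inv := fun t => by ext i; simp
      right_inv := fun t => by ext i; simp }
  · have := t.2.map' e.toLinearMap e.ker
    simp only [LinearEquiv.coe_coe, Function.comp_def] at this
    exact this
  · have := t.2.map' e.symm.toLinearMap e.symm.ker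
    simp only [LinearEquiv.coe_coe, Function.comp_def] at this
    exact this

lemma sub_card {n : ℕ} {S O : Submodule (ZMod 2) ((Fin n ⊕ Fin n) → ZMod 2)} (h : S ≤ O) :
    (Finset.univ.filter fun u => u ∈ O ∧ u ∉ S).card
      = 2 ^ finrank (ZMod 2) O - 2 ^ finrank (ZMod 2) S := by
  have e : (Finset.univ.filter fun u => u ∈ O ∧ u ∉ S)
      = (Finset.univ.filter (· ∈ O)) \ (Finset.univ.filter (· ∈ S)) := by
    ext u; simp
  rw [e, Finset.card_sdiff_of_subset ?_, card_filter_mem, card_filter_mem]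
  intro u hu
  simp only [Finset.mem_filter] at *
  exact ⟨hu.1, h hu.2⟩

lemma colSpan_isotropic {n k : ℕ} {A : Matrix (Fin n ⊕ Fin n) (Fin k) (ZMod 2)}
    (h : IsIsotropic A) : ∀ x ∈ colSpan A, ∀ y ∈ colSpan A, symp x y = 0 := by
  apply span_symp_zero
  rintro x ⟨i, rfl⟩ y ⟨j, rfl⟩
  exact h i j

lemma uSet_eq {n k : ℕ} (A : Matrix (Fin n ⊕ Fin n) (Fin k) (ZMod 2)) :
    uSet A = Finset.univ.filter fun u =>
      u ∈ (sympBilin n).orthogonal (colSpan A) ∧ u ∉ colSpan A := by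
  ext u
  simp only [uSet, Finset.mem_filter, Finset.mem_univ, true_and,
    LinearMap.BilinForm.mem_orthogonal_iff]
  constructor
  · rintro ⟨h1, h2⟩
    refine ⟨fun v hv => ?_, h2⟩
    show sympBilin n v u = 0
    rw [sympBilin_apply, symp_comm]
    exact h1 v hv
  · rintro ⟨h1, h2⟩
    refine ⟨fun v hv => ?_, h2⟩
    have : sympBilin n v u = 0 := h1 v hv
    rwa [sympBilin_apply, symp_comm] at this

lemma uSet_card {n k : ℕ} {A : Matrix (Fin n ⊕ Fin n) (Fin k) (ZMod 2)}
    (h : IsIsotropic A) :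
    (uSet A).card = 2 ^ (2 * n - finrank (ZMod 2) (colSpan A))
      - 2 ^ finrank (ZMod 2) (colSpan A) := by
  have hle : colSpan A ≤ (sympBilin n).orthogonal (colSpan A) := by
    intro x hx
    rw [LinearMap.BilinForm.mem_orthogonal_iff]
    intro v hv
    show sympBilin n v x = 0
    rw [sympBilin_apply]
    exact colSpan_isotropic h v hv x hx
  rw [uSet_eq, sub_card hle,
    LinearMap.BilinForm.finrank_orthogonal (sympBilin_nondeg n),
    finrank_V]

lemma finrank_sup_span_singleton {n : ℕ}
    {S : Submodule (ZMod 2) ((Fin n ⊕ Fin n) → ZMod 2)}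
    {u : (Fin n ⊕ Fin n) → ZMod 2} (hu : u ∉ S) :
    finrank (ZMod 2) ↥(S ⊔ Submodule.span (ZMod 2) {u}) = finrank (ZMod 2) S + 1 := by
  have hne : u ≠ 0 := fun h => hu (h ▸ S.zero_mem)
  have hinf : S ⊓ Submodule.span (ZMod 2) {u} = ⊥ := by
    rw [Submodule.eq_bot_iff]
    intro x hx
    rw [Submodule.mem_inf] at hx
    obtain ⟨hxS, hxu⟩ := hx
    rw [Submodule.mem_span_singleton] at hxu
    obtain ⟨c, rfl⟩ := hxu
    by_cases hc : c = 0
    · simp [hc]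
    · exfalso
      apply hu
      have : c⁻¹ • (c • u) ∈ S := S.smul_mem _ hxS
      rwa [smul_smul, inv_mul_cancel₀ hc, one_smul] at this
  have := Submodule.finrank_sup_add_finrank_inf_eq S (Submodule.span (ZMod 2) {u})
  rw [hinf, finrank_bot, add_zero, finrank_span_singleton hne] at this
  omega

lemma span_cols_eq_iff {n k : ℕ} {B : Matrix (Fin n ⊕ Fin n) (Fin k) (ZMod 2)}
    {W : Submodule (ZMod 2) ((Fin n ⊕ Fin n) → ZMod 2)}
    (hli : LinearIndependent (ZMod 2) (fun i : Fin k => fun r => B r i))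
    (hW : finrank (ZMod 2) W = k) :
    Submodule.span (ZMod 2) (Set.range fun i : Fin k => fun r => B r i) = W ↔
      ∀ i : Fin k, (fun r => B r i) ∈ W := by
  constructor
  · rintro rfl i
    exact Submodule.subset_span ⟨i, rfl⟩
  · intro h
    have hle : Submodule.span (ZMod 2) (Set.range fun i : Fin k => fun r => B r i) ≤ W := by
      rw [Submodule.span_le]
      rintro x ⟨i, rfl⟩
      exact h i
    refine Submodule.eq_of_le_of_finrank_le hle ?_
    rw [hW]
    have := rank_of_li hli
    rw [rank_eq_finrank_colSpan] at this
    rw [colSpan] at this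
    omega

lemma bases_card {n : ℕ} {W : Submodule (ZMod 2) ((Fin n ⊕ Fin n) → ZMod 2)}
    (hW : finrank (ZMod 2) W = n) :
    (Finset.univ.filter fun B : Matrix (Fin n ⊕ Fin n) (Fin n) (ZMod 2) =>
        LinearIndependent (ZMod 2) (fun i : Fin n => fun r => B r i) ∧
        Submodule.span (ZMod 2) (Set.range fun i : Fin n => fun r => B r i) = W).card
      = liCount n W := by
  rw [← filter_card_eq_liCount]
  congr 1
  ext B
  simp only [Finset.mem_filter, Finset.mem_univ, true_and]
  constructor
  · rintro ⟨h1, h2⟩; exact ⟨h1, (span_cols_eq_iff h1 hW).1 h2⟩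
  · rintro ⟨h1, h2⟩; exact ⟨h1, (span_cols_eq_iff h1 hW).2 h2⟩

lemma FRI_filter_card {n k : ℕ} {L : Submodule (ZMod 2) ((Fin n ⊕ Fin n) → ZMod 2)}
    (hLiso : ∀ x ∈ L, ∀ y ∈ L, symp x y = 0) :
    ((fullRankIso n k).filter fun A => colSpan A ≤ L).card = liCount k L := by
  rw [← filter_card_eq_liCount]
  congr 1
  ext A
  simp only [fullRankIso, Finset.filter_filter, Finset.mem_filter, Finset.mem_univ, true_and]
  constructor
  · rintro ⟨⟨hrank, _⟩, hle⟩
    exact ⟨li_of_rank hrank, fun i => hle (Submodule.subset_span ⟨i, rfl⟩)⟩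
  · rintro ⟨hli, hmem⟩
    have hle : colSpan A ≤ L := by
      rw [colSpan, Submodule.span_le]
      rintro x ⟨i, rfl⟩
      exact hmem i
    exact ⟨⟨rank_of_li hli, fun i j => hLiso _ (hmem i) _ (hmem j)⟩, hle⟩

lemma sup_isotropic {n k : ℕ} {A : Matrix (Fin n ⊕ Fin n) (Fin k) (ZMod 2)}
    {u : (Fin n ⊕ Fin n) → ZMod 2} (hiso : IsIsotropic A) (hu : u ∈ uSet A) :
    ∀ x ∈ colSpan A ⊔ Submodule.span (ZMod 2) {u},
      ∀ y ∈ colSpan A ⊔ Submodule.span (ZMod 2) {u}, symp x y = 0 := by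
  simp only [uSet, Finset.mem_filter] at hu
  obtain ⟨-, hperp, -⟩ := hu
  have hsup : colSpan A ⊔ Submodule.span (ZMod 2) {u}
      = Submodule.span (ZMod 2) ((Set.range fun i : Fin k => fun r => A r i) ∪ {u}) := by
    rw [Submodule.span_union, colSpan]
  rw [hsup]
  apply span_symp_zero
  rintro x (⟨i, rfl⟩ | hx) y (⟨j, rfl⟩ | hy)
  · exact hiso i j
  · rw [Set.mem_singleton_iff] at hy; subst hy
    rw [symp_comm]
    exact hperp _ (Submodule.subset_span ⟨i, rfl⟩)
  · rw [Set.mem_singleton_iff] at hx; subst hx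
    exact hperp _ (Submodule.subset_span ⟨j, rfl⟩)
  · rw [Set.mem_singleton_iff] at hx hy; rw [hx, hy]
    exact symp_self u

lemma mem_basisSet_imp {n k : ℕ} {A : Matrix (Fin n ⊕ Fin n) (Fin k) (ZMod 2)}
    {u : (Fin n ⊕ Fin n) → ZMod 2} {B : Matrix (Fin n ⊕ Fin n) (Fin n) (ZMod 2)}
    (hiso : IsIsotropic A) (hu : u ∈ uSet A) (hB : B ∈ basisSet A u) :
    B ∈ fullRankIso n n := by
  simp only [basisSet, Finset.mem_filter, Finset.mem_univ, true_and] at hB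
  obtain ⟨hli, hspan⟩ := hB
  simp only [fullRankIso, Finset.mem_filter, Finset.mem_univ, true_and]
  refine ⟨rank_of_li hli, fun i j => ?_⟩
  have hmem : ∀ i : Fin n, (fun r => B r i) ∈ colSpan A ⊔ Submodule.span (ZMod 2) {u} := by
    intro i
    rw [← hspan]
    exact Submodule.subset_span ⟨i, rfl⟩
  exact sup_isotropic hiso hu _ (hmem i) _ (hmem j)

lemma basisSet_nonempty {n k : ℕ} {A : Matrix (Fin n ⊕ Fin n) (Fin k) (ZMod 2)}
    {u : (Fin n ⊕ Fin n) → ZMod 2}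
    (h : finrank (ZMod 2) ↥(colSpan A ⊔ Submodule.span (ZMod 2) {u}) = n) :
    (basisSet A u).Nonempty := by
  set W := colSpan A ⊔ Submodule.span (ZMod 2) {u} with hW
  let b : Basis (Fin n) (ZMod 2) W := Module.finBasisOfFinrankEq (ZMod 2) W h
  refine ⟨fun r i => (b i : (Fin n ⊕ Fin n) → ZMod 2) r, ?_⟩
  simp only [basisSet, Finset.mem_filter, Finset.mem_univ, true_and, Finset.mem_filter_univ]
  refine Finset.mem_filter.mpr ⟨Finset.mem_univ _, ?_, ?_⟩
  · rw [li_coe_iff]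
    exact b.linearIndependent
  · have : (Set.range fun i : Fin n => ((b i : (Fin n ⊕ Fin n) → ZMod 2)))
        = W.subtype '' (Set.range b) := by
      rw [← Set.range_comp]; rfl
    rw [this, ← Submodule.map_span, b.span_eq, Submodule.map_top, Submodule.range_subtype]

lemma FRI_nonempty (n k : ℕ) (hk : k ≤ n) : (fullRankIso n k).Nonempty := by
  refine ⟨Matrix.of fun r j => match r with
    | Sum.inl i => if (i : ℕ) = (j : ℕ) then 1 else 0
    | Sum.inr _ => 0, ?_⟩
  simp only [fullRankIso, Finset.mem_filter, Finset.mem_univ, true_and]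
  have hli : LinearIndependent (ZMod 2)
      (fun j : Fin k => fun r : Fin n ⊕ Fin n =>
        (Matrix.of fun r j => match r with
          | Sum.inl i => if (i : ℕ) = (j : ℕ) then (1 : ZMod 2) else 0
          | Sum.inr _ => 0) r j) := by
    apply LinearIndependent.of_comp
      (LinearMap.funLeft (ZMod 2) (ZMod 2) (fun j : Fin k => Sum.inl (Fin.castLE hk j)))
    have : ((LinearMap.funLeft (ZMod 2) (ZMod 2)
        (fun j : Fin k => Sum.inl (Fin.castLE hk j))) ∘
        fun j : Fin k => fun r : Fin n ⊕ Fin n =>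
        (Matrix.of fun r j => match r with
          | Sum.inl i => if (i : ℕ) = (j : ℕ) then (1 : ZMod 2) else 0
          | Sum.inr _ => 0) r j)
        = fun j : Fin k => Pi.single j (1 : ZMod 2) := by
      ext j i
      simp only [Function.comp, LinearMap.funLeft_apply, Matrix.of_apply, Pi.single_apply]
      by_cases h : i = j
      · subst h; simp
      · rw [if_neg h, if_neg (by simpa [Fin.ext_iff] using h)]
    rw [this]
    have hb := (Pi.basisFun (ZMod 2) (Fin k)).linearIndependent
    have hbeq : ⇑(Pi.basisFun (ZMod 2) (Fin k)) = fun j : Fin k => Pi.single j (1 : ZMod 2) := by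
      ext j i
      simp [Pi.basisFun_apply, Pi.single_apply]
    rwa [hbeq] at hb
  refine ⟨rank_of_li hli, fun i j => ?_⟩
  unfold symp
  simp

noncomputable def Fval (n : ℕ) (B₀ : Matrix (Fin n ⊕ Fin n) (Fin n) (ZMod 2)) : ℝ :=
  (1 / ((fullRankIso n (n - 1)).card : ℝ)) *
      ∑ A ∈ fullRankIso n (n - 1),
        (1 / ((uSet A).card : ℝ)) *
          ∑ u ∈ uSet A,
            (1 / ((basisSet A u).card : ℝ)) *
              (if B₀ ∈ basisSet A u then 1 else 0)

lemma mem_FRI {n k : ℕ} {A : Matrix (Fin n ⊕ Fin n) (Fin k) (ZMod 2)} :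
    A ∈ fullRankIso n k ↔ A.rank = k ∧ IsIsotropic A := by
  simp [fullRankIso]

lemma mem_uSet {n k : ℕ} {A : Matrix (Fin n ⊕ Fin n) (Fin k) (ZMod 2)}
    {u : (Fin n ⊕ Fin n) → ZMod 2} :
    u ∈ uSet A ↔ (∀ v ∈ colSpan A, symp u v = 0) ∧ u ∉ colSpan A := by
  simp [uSet]

lemma step1 {n : ℕ} {B₀ : Matrix (Fin n ⊕ Fin n) (Fin n) (ZMod 2)}
    (hB : B₀ ∉ fullRankIso n n) : Fval n B₀ = 0 := by
  unfold Fval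
  rw [Finset.sum_eq_zero, mul_zero]
  intro A hA
  rw [Finset.sum_eq_zero, mul_zero]
  intro u hu
  rw [if_neg, mul_zero]
  intro hmem
  exact hB (mem_basisSet_imp (mem_FRI.mp hA).2 hu hmem)

lemma uSet_card' {n : ℕ} {A : Matrix (Fin n ⊕ Fin n) (Fin (n-1)) (ZMod 2)}
    (hn : 2 ≤ n) (hA : A ∈ fullRankIso n (n-1)) :
    (uSet A).card = 2 ^ (n+1) - 2 ^ (n-1) := by
  obtain ⟨hrank, hiso⟩ := mem_FRI.mp hA
  have hfin : finrank (ZMod 2) (colSpan A) = n - 1 := by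
    rw [← rank_eq_finrank_colSpan]; exact hrank
  rw [uSet_card hiso, hfin]
  congr 1
  congr 1
  omega

lemma uSet_card_ne {n : ℕ} {A : Matrix (Fin n ⊕ Fin n) (Fin (n-1)) (ZMod 2)}
    (hn : 2 ≤ n) (hA : A ∈ fullRankIso n (n-1)) :
    ((uSet A).card : ℝ) ≠ 0 := by
  rw [uSet_card' hn hA]
  have h : 2 ^ (n-1) < 2 ^ (n+1) := Nat.pow_lt_pow_right (by norm_num) (by omega)
  have : (0:ℕ) < 2 ^ (n+1) - 2 ^ (n-1) := by omega
  exact_mod_cast this.ne'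

lemma finrank_sup_n {n : ℕ} {A : Matrix (Fin n ⊕ Fin n) (Fin (n-1)) (ZMod 2)}
    (hn : 2 ≤ n) (hA : A ∈ fullRankIso n (n-1)) {u : (Fin n ⊕ Fin n) → ZMod 2}
    (hu : u ∈ uSet A) :
    finrank (ZMod 2) ↥(colSpan A ⊔ Submodule.span (ZMod 2) {u}) = n := by
  obtain ⟨hrank, hiso⟩ := mem_FRI.mp hA
  have hfin : finrank (ZMod 2) (colSpan A) = n - 1 := by
    rw [← rank_eq_finrank_colSpan]; exact hrank
  rw [finrank_sup_span_singleton (mem_uSet.mp hu).2, hfin]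
  omega

lemma basisSet_card_ne {n : ℕ} {A : Matrix (Fin n ⊕ Fin n) (Fin (n-1)) (ZMod 2)}
    (hn : 2 ≤ n) (hA : A ∈ fullRankIso n (n-1)) {u : (Fin n ⊕ Fin n) → ZMod 2}
    (hu : u ∈ uSet A) : ((basisSet A u).card : ℝ) ≠ 0 := by
  have := basisSet_nonempty (finrank_sup_n hn hA hu)
  exact_mod_cast (Finset.card_pos.mpr this).ne'

lemma step2 {n : ℕ} (hn : 2 ≤ n) :
    ∑ B₀ : Matrix (Fin n ⊕ Fin n) (Fin n) (ZMod 2), Fval n B₀ = 1 := by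
  have hN : ((fullRankIso n (n-1)).card : ℝ) ≠ 0 := by
    have := FRI_nonempty n (n-1) (by omega)
    exact_mod_cast (Finset.card_pos.mpr this).ne'
  unfold Fval
  rw [← Finset.mul_sum, Finset.sum_comm]
  have key : ∀ A ∈ fullRankIso n (n-1),
      (∑ B₀ : Matrix (Fin n ⊕ Fin n) (Fin n) (ZMod 2),
        (1 / ((uSet A).card : ℝ)) *
          ∑ u ∈ uSet A,
            (1 / ((basisSet A u).card : ℝ)) *
              (if B₀ ∈ basisSet A u then 1 else 0)) = 1 := by
    intro A hA
    rw [← Finset.mul_sum, Finset.sum_comm]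
    have inner : ∀ u ∈ uSet A,
        (∑ B₀ : Matrix (Fin n ⊕ Fin n) (Fin n) (ZMod 2),
          (1 / ((basisSet A u).card : ℝ)) * (if B₀ ∈ basisSet A u then 1 else 0)) = 1 := by
      intro u hu
      rw [← Finset.mul_sum, Finset.sum_boole]
      have hfil : Finset.univ.filter (· ∈ basisSet A u) = basisSet A u := by
        ext B; simp
      rw [hfil]
      rw [one_div, inv_mul_cancel₀ (basisSet_card_ne hn hA hu)]
    rw [Finset.sum_congr rfl inner, Finset.sum_const, nsmul_eq_mul, mul_one,
      one_div, inv_mul_cancel₀ (uSet_card_ne hn hA)]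
  rw [Finset.sum_congr rfl key, Finset.sum_const, nsmul_eq_mul, mul_one,
    one_div, inv_mul_cancel₀ hN]

lemma filter_claim {n : ℕ} (hn : 2 ≤ n) {A : Matrix (Fin n ⊕ Fin n) (Fin (n-1)) (ZMod 2)}
    (hA : A ∈ fullRankIso n (n-1)) {B₀ : Matrix (Fin n ⊕ Fin n) (Fin n) (ZMod 2)}
    (hB₀ : B₀ ∈ fullRankIso n n) :
    ((uSet A).filter fun u => colSpan B₀ = colSpan A ⊔ Submodule.span (ZMod 2) {u})
      = if colSpan A ≤ colSpan B₀
        then Finset.univ.filter fun u => u ∈ colSpan B₀ ∧ u ∉ colSpan A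
        else ∅ := by
  obtain ⟨hrankA, hisoA⟩ := mem_FRI.mp hA
  obtain ⟨hrankB, hisoB⟩ := mem_FRI.mp hB₀
  have hfinS : finrank (ZMod 2) (colSpan A) = n - 1 := by
    rw [← rank_eq_finrank_colSpan]; exact hrankA
  have hfinL : finrank (ZMod 2) (colSpan B₀) = n := by
    rw [← rank_eq_finrank_colSpan]; exact hrankB
  have hLiso := colSpan_isotropic hisoB
  by_cases hSL : colSpan A ≤ colSpan B₀
  · rw [if_pos hSL]
    ext u
    simp only [Finset.mem_filter, Finset.mem_univ, true_and, mem_uSet]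
    constructor
    · rintro ⟨⟨_, hnotS⟩, hcond⟩
      refine ⟨?_, hnotS⟩
      rw [hcond]
      exact Submodule.mem_sup_right (Submodule.mem_span_singleton_self u)
    · rintro ⟨huL, hnotS⟩
      refine ⟨⟨fun v hv => hLiso u huL v (hSL hv), hnotS⟩, ?_⟩
      have hle : colSpan A ⊔ Submodule.span (ZMod 2) {u} ≤ colSpan B₀ := by
        refine sup_le hSL ?_
        rw [Submodule.span_le, Set.singleton_subset_iff]
        exact huL
      refine (Submodule.eq_of_le_of_finrank_le hle ?_).symm
      rw [hfinL, finrank_sup_span_singleton hnotS, hfinS]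
      omega
  · rw [if_neg hSL]
    rw [Finset.filter_eq_empty_iff]
    intro u _
    intro hcond
    exact hSL (hcond ▸ le_sup_left)

lemma Fval_formula {n : ℕ} (hn : 2 ≤ n) {B₀ : Matrix (Fin n ⊕ Fin n) (Fin n) (ZMod 2)}
    (hB₀ : B₀ ∈ fullRankIso n n) :
    Fval n B₀ = (1 / ((fullRankIso n (n - 1)).card : ℝ)) *
      ((liCount (n-1) (colSpan B₀) : ℝ) *
        ((1 / (((2^(n+1) - 2^(n-1) : ℕ) : ℝ))) * (((2^n - 2^(n-1) : ℕ) : ℝ) *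
          (1 / (liCount n (colSpan B₀) : ℝ))))) := by
  obtain ⟨hrankB, hisoB⟩ := mem_FRI.mp hB₀
  have hB₀li : LinearIndependent (ZMod 2) (fun i : Fin n => fun r => B₀ r i) :=
    li_of_rank hrankB
  have hfinL : finrank (ZMod 2) (colSpan B₀) = n := by
    rw [← rank_eq_finrank_colSpan]; exact hrankB
  have hLiso := colSpan_isotropic hisoB
  unfold Fval
  have key : ∀ A ∈ fullRankIso n (n-1),
      ((1 : ℝ) / ((uSet A).card : ℝ)) *
          ∑ u ∈ uSet A,
            (1 / ((basisSet A u).card : ℝ)) *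
              (if B₀ ∈ basisSet A u then 1 else 0)
      = if colSpan A ≤ colSpan B₀
        then (1 / (((2^(n+1) - 2^(n-1) : ℕ) : ℝ))) * (((2^n - 2^(n-1) : ℕ) : ℝ) *
          (1 / (liCount n (colSpan B₀) : ℝ)))
        else 0 := by
    intro A hA
    have hmemBS : ∀ u : (Fin n ⊕ Fin n) → ZMod 2,
        B₀ ∈ basisSet A u ↔ colSpan B₀ = colSpan A ⊔ Submodule.span (ZMod 2) {u} := by
      intro u
      simp only [basisSet, Finset.mem_filter, Finset.mem_univ, true_and]
      constructor
      · rintro ⟨-, h⟩; exact h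
      · intro h; exact ⟨hB₀li, h⟩
    have inner : ∀ u ∈ uSet A,
        (1 / ((basisSet A u).card : ℝ)) * (if B₀ ∈ basisSet A u then (1:ℝ) else 0)
        = if colSpan B₀ = colSpan A ⊔ Submodule.span (ZMod 2) {u}
          then (1 / (liCount n (colSpan B₀) : ℝ)) else 0 := by
      intro u hu
      by_cases hcond : colSpan B₀ = colSpan A ⊔ Submodule.span (ZMod 2) {u}
      · rw [if_pos hcond, if_pos ((hmemBS u).mpr hcond), mul_one]
        have hbs : basisSet A u
            = Finset.univ.filter fun B : Matrix (Fin n ⊕ Fin n) (Fin n) (ZMod 2) =>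
                LinearIndependent (ZMod 2) (fun i : Fin n => fun r => B r i) ∧
                Submodule.span (ZMod 2) (Set.range fun i : Fin n => fun r => B r i)
                  = colSpan B₀ := by
          unfold basisSet
          simp only [← hcond]
        rw [hbs, bases_card hfinL]
      · rw [if_neg hcond, if_neg (fun h => hcond ((hmemBS u).mp h)), mul_zero]
    rw [Finset.sum_congr rfl inner, ← Finset.sum_filter, Finset.sum_const, nsmul_eq_mul]
    rw [filter_claim hn hA hB₀]
    obtain ⟨hrankA, hisoA⟩ := mem_FRI.mp hA
    have hfinS : finrank (ZMod 2) (colSpan A) = n - 1 := by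
      rw [← rank_eq_finrank_colSpan]; exact hrankA
    by_cases hSL : colSpan A ≤ colSpan B₀
    · rw [if_pos hSL, if_pos hSL]
      rw [sub_card hSL, hfinL, hfinS, uSet_card' hn hA]
    · rw [if_neg hSL, if_neg hSL]
      simp
  rw [Finset.sum_congr rfl key, ← Finset.sum_filter, Finset.sum_const, nsmul_eq_mul]
  rw [FRI_filter_card hLiso]

lemma Fval_const {n : ℕ} (hn : 2 ≤ n) {B₀ B₁ : Matrix (Fin n ⊕ Fin n) (Fin n) (ZMod 2)}
    (h0 : B₀ ∈ fullRankIso n n) (h1 : B₁ ∈ fullRankIso n n) :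
    Fval n B₀ = Fval n B₁ := by
  rw [Fval_formula hn h0, Fval_formula hn h1]
  have hf : finrank (ZMod 2) (colSpan B₀) = finrank (ZMod 2) (colSpan B₁) := by
    rw [← rank_eq_finrank_colSpan, ← rank_eq_finrank_colSpan,
      (mem_FRI.mp h0).1, (mem_FRI.mp h1).1]
  rw [liCount_congr (k := n - 1) hf, liCount_congr (k := n) hf]

/-- Sampling `A` uniformly from the full-rank isotropic matrices in `F₂^{2n×(n-1)}`,
then `u` uniformly from `S^⊥ \ S` where `S = im(A)`, then `B` uniformly from the
matrices whose columns form a basis of `S + span{u}`, produces `B` uniformly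
distributed over the full-rank isotropic matrices in `F₂^{2n×n}`. -/
theorem stmt16 (n : ℕ) (hn : 2 ≤ n) (B₀ : Matrix (Fin n ⊕ Fin n) (Fin n) (ZMod 2)) :
    (1 / ((fullRankIso n (n - 1)).card : ℝ)) *
        ∑ A ∈ fullRankIso n (n - 1),
          (1 / ((uSet A).card : ℝ)) *
            ∑ u ∈ uSet A,
              (1 / ((basisSet A u).card : ℝ)) *
                (if B₀ ∈ basisSet A u then 1 else 0)
      = if B₀ ∈ fullRankIso n n then 1 / ((fullRankIso n n).card : ℝ) else 0 := by
  show Fval n B₀ = _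
  by_cases hB : B₀ ∈ fullRankIso n n
  · rw [if_pos hB]
    have hsub : ∑ B₁ ∈ fullRankIso n n, Fval n B₁
        = ∑ B₁ : Matrix (Fin n ⊕ Fin n) (Fin n) (ZMod 2), Fval n B₁ :=
      Finset.sum_subset (Finset.subset_univ _) (fun x _ hx => step1 hx)
    have hconst : ∑ B₁ ∈ fullRankIso n n, Fval n B₁
        = ((fullRankIso n n).card : ℝ) * Fval n B₀ := by
      rw [Finset.sum_congr rfl (fun B₁ h1 => Fval_const hn h1 hB),
        Finset.sum_const, nsmul_eq_mul]
    have hcard : ((fullRankIso n n).card : ℝ) ≠ 0 :=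
      Nat.cast_ne_zero.mpr (Finset.card_pos.mpr ⟨B₀, hB⟩).ne'
    have hkey : ((fullRankIso n n).card : ℝ) * Fval n B₀ = 1 := by
      rw [← hconst, hsub, step2 hn]
    rw [eq_div_iff hcard]
    linarith [hkey]
  · rw [if_neg hB]
    exact step1 hB
end
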